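/- arXiv:math/0506092 — 5 statements merged into one kernel-verified Lean document; each statement's English description precedes it below -/
import Mathlib

section
/- Let π be a nonzero Borel measure on (0,∞) with ∫ min(r, r²) π(dr) < ∞, and Ψ(q) = ∫_{(0,∞)} (e^{-q r} − 1 + q r) π(dr). Suppose u : [0,∞) × (0,∞) → (0,∞) is such that for every q > 0 the map t ↦ u_t(q) is differentiable with ∂u_t(q)/∂t = −Ψ(u_t(q)) and u_0(q) = q. Then the following are equivalent: (i) ∫_1^∞ ds/Ψ(s) < ∞; (ii) for every t > 0, sup_{q > 0} u_t(q) < ∞. -/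
/-!
Separation of variables: since `Ψ` is positive and continuous on `(0, ∞)`, the ODE forces
`∫_{u_t(q)}^q ds / Ψ(s) = t` for all `q > 0` and `t ≥ 0`. If `1/Ψ` is integrable at infinity,
its tails eventually have mass `< t`, which caps `u_t(q)`. Conversely, if `u_1 ≤ C`, then
`∫_C^b ds / Ψ(s) ≤ ∫_{u_1(b)}^b ds / Ψ(s) = 1` for every `b ≥ C`.
-/

open MeasureTheory Set Filter Topology

lemma exp_neg_sub_one_add_nonneg (x : ℝ) : 0 ≤ Real.exp (-x) - 1 + x := by
  linarith [Real.add_one_le_exp (-x)]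

lemma exp_neg_sub_one_add_pos {x : ℝ} (hx : x ≠ 0) : 0 < Real.exp (-x) - 1 + x := by
  linarith [Real.add_one_lt_exp (neg_ne_zero.mpr hx)]

lemma exp_neg_sub_one_add_le_min {x : ℝ} (hx : 0 ≤ x) :
    Real.exp (-x) - 1 + x ≤ min x (x ^ 2) := by
  have h_one : Real.exp (-x) ≤ 1 := Real.exp_le_one_iff.mpr (by linarith)
  -- `exp (-x) ≤ 1 / (1 + x)`, so `exp (-x) - 1 + x ≤ x ^ 2 / (1 + x)`
  have h_inv : Real.exp (-x) * (1 + x) ≤ 1 := by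
    rw [Real.exp_neg, inv_mul_le_iff₀ (Real.exp_pos x)]
    linarith [Real.add_one_le_exp x]
  have h_nonneg := exp_neg_sub_one_add_nonneg x
  exact le_min (by linarith) (by nlinarith)

lemma exp_neg_mul_sub_one_add_mul_le {q r : ℝ} (hq : 0 ≤ q) (hr : 0 ≤ r) :
    Real.exp (-q * r) - 1 + q * r ≤ max q (q ^ 2) * min r (r ^ 2) := by
  rw [neg_mul, mul_min_of_nonneg _ _ (hq.trans (le_max_left _ _))]
  refine (exp_neg_sub_one_add_le_min (mul_nonneg hq hr)).trans (min_le_min ?_ ?_)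
  · exact mul_le_mul_of_nonneg_right (le_max_left _ _) hr
  · rw [mul_pow]
    exact mul_le_mul_of_nonneg_right (le_max_right _ _) (sq_nonneg r)

section BranchingMechanism

variable {π : Measure ℝ}

lemma ae_pos_of_measure_compl_Ioi (hπsupp : π (Ioi 0)ᶜ = 0) :
    ∀ᵐ r ∂π, 0 < r := by
  filter_upwards [measure_eq_zero_iff_ae_notMem.mp hπsupp] with r hr
  simpa using hr

lemma integrable_min_self_sq (hπsupp : π (Ioi 0)ᶜ = 0)
    (hπmom : ∫⁻ r, ENNReal.ofReal (min r (r ^ 2)) ∂π < ⊤) :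
    Integrable (fun r => min r (r ^ 2)) π := by
  refine ⟨by fun_prop, (hasFiniteIntegral_iff_ofReal ?_).mpr hπmom⟩
  filter_upwards [ae_pos_of_measure_compl_Ioi hπsupp] with r hr
  positivity

lemma norm_exp_neg_mul_sub_one_add_mul_le (hπsupp : π (Ioi 0)ᶜ = 0) {q : ℝ} (hq : 0 ≤ q) :
    ∀ᵐ r ∂π, ‖Real.exp (-q * r) - 1 + q * r‖ ≤ max q (q ^ 2) * min r (r ^ 2) := by
  filter_upwards [ae_pos_of_measure_compl_Ioi hπsupp] with r hr
  rw [Real.norm_of_nonneg (by simpa [neg_mul] using exp_neg_sub_one_add_nonneg (q * r))]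
  exact exp_neg_mul_sub_one_add_mul_le hq hr.le

lemma integrable_exp_neg_mul_sub_one_add_mul (hπsupp : π (Ioi 0)ᶜ = 0)
    (hπmom : ∫⁻ r, ENNReal.ofReal (min r (r ^ 2)) ∂π < ⊤) {q : ℝ} (hq : 0 ≤ q) :
    Integrable (fun r => Real.exp (-q * r) - 1 + q * r) π :=
  ((integrable_min_self_sq hπsupp hπmom).const_mul _).mono' (by fun_prop)
    (norm_exp_neg_mul_sub_one_add_mul_le hπsupp hq)

lemma integral_exp_neg_mul_sub_one_add_mul_pos (hπ : π ≠ 0) (hπsupp : π (Ioi 0)ᶜ = 0)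
    (hπmom : ∫⁻ r, ENNReal.ofReal (min r (r ^ 2)) ∂π < ⊤) {q : ℝ} (hq : 0 < q) :
    0 < ∫ r, (Real.exp (-q * r) - 1 + q * r) ∂π := by
  have h_pos : ∀ᵐ r ∂π, 0 < Real.exp (-q * r) - 1 + q * r := by
    filter_upwards [ae_pos_of_measure_compl_Ioi hπsupp] with r hr
    simpa [neg_mul] using exp_neg_sub_one_add_pos (mul_pos hq hr).ne'
  rw [integral_pos_iff_support_of_nonneg_ae (h_pos.mono fun _ h => h.le)
    (integrable_exp_neg_mul_sub_one_add_mul hπsupp hπmom hq.le)]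
  refine pos_iff_ne_zero.mpr fun h_null => hπ ?_
  have h_false : ∀ᵐ r ∂π, False := by
    filter_upwards [h_pos, measure_eq_zero_iff_ae_notMem.mp h_null] with r hr h_zero
    exact h_zero hr.ne'
  exact ae_eq_bot.mp (eventually_false_iff_eq_bot.mp h_false)

lemma continuousOn_integral_exp_neg_mul_sub_one_add_mul (hπsupp : π (Ioi 0)ᶜ = 0)
    (hπmom : ∫⁻ r, ENNReal.ofReal (min r (r ^ 2)) ∂π < ⊤) :
    ContinuousOn (fun q => ∫ r, (Real.exp (-q * r) - 1 + q * r) ∂π) (Ici 0) := by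
  intro q₀ _
  set Q := q₀ + 1
  have h_near : ∀ᶠ q in 𝓝[Ici 0] q₀, q ∈ Icc 0 Q :=
    inter_mem self_mem_nhdsWithin (nhdsWithin_le_nhds (Iic_mem_nhds (lt_add_one q₀)))
  refine continuousWithinAt_of_dominated (bound := fun r => max Q (Q ^ 2) * min r (r ^ 2))
    (.of_forall fun _ => by fun_prop) (h_near.mono fun q hq => ?_)
    ((integrable_min_self_sq hπsupp hπmom).const_mul _) (.of_forall fun _ => by fun_prop)
  filter_upwards [norm_exp_neg_mul_sub_one_add_mul_le hπsupp hq.1,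
    ae_pos_of_measure_compl_Ioi hπsupp] with r hr hr_pos
  refine hr.trans (mul_le_mul_of_nonneg_right ?_ (by positivity))
  exact max_le_max hq.2 (pow_le_pow_left₀ hq.1 hq.2 2)

end BranchingMechanism

lemma integral_inv_eq_of_hasDerivWithinAt {g φ : ℝ → ℝ} (hg : ContinuousOn g (Ioi 0))
    (hg_ne : ∀ x, 0 < x → g x ≠ 0) (hφ_pos : ∀ s, 0 ≤ s → 0 < φ s)
    (hφ : ∀ s, 0 ≤ s → HasDerivWithinAt φ (-g (φ s)) (Ici 0) s) {t : ℝ} (ht : 0 ≤ t) :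
    ∫ x in φ t..φ 0, (g x)⁻¹ = t := by
  have hg_inv : ContinuousOn (fun x => (g x)⁻¹) (Ioi 0) := hg.inv₀ hg_ne
  -- `s ↦ ∫_{φ s}^{φ 0} 1/g - s` has zero right derivative on `[0, ∞)`
  have h_deriv : ∀ s, 0 ≤ s →
      HasDerivWithinAt (fun s => (∫ x in φ s..φ 0, (g x)⁻¹) - s) 0 (Ici 0) s := by
    intro s hs
    have h_prim : HasDerivAt (fun y => ∫ x in y..φ 0, (g x)⁻¹) (-(g (φ s))⁻¹) (φ s) :=
      intervalIntegral.integral_hasDerivAt_left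
        ((hg_inv.mono fun x hx => (lt_min (hφ_pos s hs) (hφ_pos 0 le_rfl)).trans_le hx.1)
          |>.intervalIntegrable)
        (hg_inv.stronglyMeasurableAtFilter isOpen_Ioi _ (hφ_pos s hs))
        (hg_inv.continuousAt (isOpen_Ioi.mem_nhds (hφ_pos s hs)))
    have h := (h_prim.comp_hasDerivWithinAt s (hφ s hs)).sub (hasDerivWithinAt_id s _)
    rwa [neg_mul_neg, inv_mul_cancel₀ (hg_ne _ (hφ_pos s hs)), sub_self] at h
  have h_const := constant_of_has_deriv_right_zero
    (fun s hs => (h_deriv s hs.1).continuousWithinAt.mono Icc_subset_Ici_self)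
    (fun s hs => (h_deriv s hs.1).mono (Ici_subset_Ici.mpr hs.1)) t (right_mem_Icc.mpr ht)
  simpa [sub_eq_zero] using h_const

lemma exists_le_of_integral_eq_of_integrableOn_Ici {f : ℝ → ℝ}
    (hf_nonneg : ∀ x, 0 < x → 0 ≤ f x) (hf : IntegrableOn f (Ici 1)) {t : ℝ} (ht : 0 < t) :
    ∃ C, ∀ a b, 0 < b → ∫ x in a..b, f x = t → a ≤ C := by
  have h_int : ∀ c, 1 ≤ c → IntervalIntegrable f volume 1 c := fun c hc =>
    (intervalIntegrable_iff_integrableOn_Icc_of_le hc).mpr (hf.mono_set Icc_subset_Ici_self)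
  have h_cauchy : CauchySeq fun b => ∫ x in (1 : ℝ)..b, f x :=
    (intervalIntegral_tendsto_integral_Ioi 1 (hf.mono_set Ioi_subset_Ici_self)
      tendsto_id).cauchySeq
  obtain ⟨N, hN⟩ := Metric.cauchySeq_iff.mp h_cauchy t ht
  refine ⟨max N 1, fun a b hb hab => le_of_not_gt fun ha => ?_⟩
  have hNa : N ≤ a := (le_max_left _ _).trans ha.le
  have h1a : 1 ≤ a := (le_max_right _ _).trans ha.le
  have hab_le : a ≤ b := by
    by_contra! hba
    have h_nonneg : 0 ≤ ∫ x in b..a, f x :=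
      intervalIntegral.integral_nonneg hba.le fun x hx => hf_nonneg x (hb.trans_le hx.1)
    rw [intervalIntegral.integral_symm] at hab
    linarith
  have h_dist := hN b (hNa.trans hab_le) a hNa
  rw [Real.dist_eq, intervalIntegral.integral_interval_sub_left (h_int b (h1a.trans hab_le))
    (h_int a h1a), hab, abs_of_pos ht] at h_dist
  exact lt_irrefl t h_dist

lemma integrableOn_Ici_of_forall_integral_eq {f : ℝ → ℝ} (hf : ContinuousOn f (Ioi 0))
    (hf_nonneg : ∀ x, 0 < x → 0 ≤ f x) {t C : ℝ}
    (h : ∀ b, 0 < b → ∃ a, 0 < a ∧ a ≤ C ∧ ∫ x in a..b, f x = t) :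
    IntegrableOn f (Ici 1) := by
  have h_int : ∀ a b, 0 < a → 0 < b → IntervalIntegrable f volume a b := fun a b ha hb =>
    (hf.mono fun x hx => (lt_min ha hb).trans_le hx.1).intervalIntegrable
  set D := max C 1
  have hD : 0 < D := zero_lt_one.trans_le (le_max_right _ _)
  -- `∫_D^b f ≤ ∫_a^b f = t` as soon as `a ≤ D ≤ b`
  have h_bound : ∀ b, D ≤ b → ∫ x in (1 : ℝ)..b, ‖f x‖ ≤ (∫ x in (1 : ℝ)..D, f x) + t := by
    intro b hDb
    have hb : 0 < b := hD.trans_le hDb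
    obtain ⟨a, ha, haC, hab⟩ := h b hb
    rw [intervalIntegral.integral_congr fun x hx => Real.norm_of_nonneg (hf_nonneg x ?_),
      ← intervalIntegral.integral_add_adjacent_intervals (h_int 1 D one_pos hD) (h_int D b hD hb),
      ← hab]
    · gcongr
      refine intervalIntegral.integral_mono_interval (haC.trans (le_max_left _ _)) hDb le_rfl
        ?_ (h_int a b ha hb)
      exact (ae_restrict_iff' measurableSet_Ioc).mpr
        (.of_forall fun x hx => hf_nonneg x (ha.trans hx.1))
    · exact (lt_min one_pos hb).trans_le hx.1
  refine (integrableOn_Ici_iff_integrableOn_Ioi).mpr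
    (integrableOn_Ioi_of_intervalIntegral_norm_bounded _ 1 (fun b => ?_) tendsto_id
      ((eventually_ge_atTop D).mono h_bound))
  rcases le_or_gt b 1 with hb | hb
  · simp [Ioc_eq_empty hb.not_gt]
  · exact (h_int 1 b one_pos (one_pos.trans hb)).1

/-- With `π` a nonzero measure on `(0,∞)` with finite
`∫ min(r,r²) π(dr)` and `Ψ(q) = ∫ (e^{-qr} - 1 + qr) π(dr)`, suppose
`u : [0,∞) × (0,∞) → (0,∞)` satisfies `∂u_t(q)/∂t = -Ψ(u_t(q))`, `u_0(q) = q`.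
Then `∫_1^∞ ds/Ψ(s) < ∞` iff for every `t > 0`, `sup_{q>0} u_t(q) < ∞`. -/
theorem stmt1
    (π : Measure ℝ) (hπ : π ≠ 0) (hπsupp : π (Set.Ioi 0)ᶜ = 0)
    (hπmom : ∫⁻ r, ENNReal.ofReal (min r (r ^ 2)) ∂π < ⊤)
    (Ψ : ℝ → ℝ)
    (hΨ : ∀ q : ℝ, Ψ q = ∫ r, (Real.exp (-q * r) - 1 + q * r) ∂π)
    (u : ℝ → ℝ → ℝ)
    (hu_pos : ∀ t, 0 ≤ t → ∀ q, 0 < q → 0 < u t q)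
    (hu0 : ∀ q, 0 < q → u 0 q = q)
    (hu_deriv : ∀ q, 0 < q → ∀ t, 0 ≤ t →
      HasDerivWithinAt (fun s => u s q) (-Ψ (u t q)) (Set.Ici 0) t) :
    IntegrableOn (fun s => (Ψ s)⁻¹) (Set.Ici 1) ↔
      ∀ t, 0 < t → ∃ C : ℝ, ∀ q, 0 < q → u t q ≤ C := by
  have hΨ_pos : ∀ q, 0 < q → 0 < Ψ q := fun q hq =>
    hΨ q ▸ integral_exp_neg_mul_sub_one_add_mul_pos hπ hπsupp hπmom hq
  have hΨ_ne : ∀ q, 0 < q → Ψ q ≠ 0 := fun q hq => (hΨ_pos q hq).ne'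
  have hΨ_cont : ContinuousOn Ψ (Ioi 0) := funext hΨ ▸
    (continuousOn_integral_exp_neg_mul_sub_one_add_mul hπsupp hπmom).mono Ioi_subset_Ici_self
  have hΨ_inv_nonneg : ∀ q, 0 < q → 0 ≤ (Ψ q)⁻¹ := fun q hq => (inv_pos.mpr (hΨ_pos q hq)).le
  have h_time : ∀ q, 0 < q → ∀ t, 0 ≤ t → ∫ x in u t q..q, (Ψ x)⁻¹ = t := fun q hq t ht => by
    simpa only [hu0 q hq] using integral_inv_eq_of_hasDerivWithinAt hΨ_cont hΨ_ne
      (fun s hs => hu_pos s hs q hq) (fun s hs => hu_deriv q hq s hs) ht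
  constructor
  · intro h_int t ht
    obtain ⟨C, hC⟩ := exists_le_of_integral_eq_of_integrableOn_Ici hΨ_inv_nonneg h_int ht
    exact ⟨C, fun q hq => hC _ q hq (h_time q hq t ht.le)⟩
  · intro h_bdd
    obtain ⟨C, hC⟩ := h_bdd 1 one_pos
    exact integrableOn_Ici_of_forall_integral_eq (hΨ_cont.inv₀ hΨ_ne) hΨ_inv_nonneg
      fun b hb => ⟨u 1 b, hu_pos 1 zero_le_one b hb, hC b hb, h_time b hb 1 zero_le_one⟩
end

section
/- Let ν be a nonzero Borel measure on (0,1] with ∫ r² ν(dr) < ∞. Define Φ(q) = ∫_{(0,1]} (q r − 1 + (1−r)^q) ν(dr) for real q ≥ 1 and Ψ(q) = ∫_{(0,1]} (e^{-q r} − 1 + q r) ν(dr). Then Φ is nondecreasing on [1,∞), Φ(b) > 0 for every integer b ≥ 2, and the following are equivalent: (i) ∑_{b=2}^{∞} Φ(b)^{-1} < ∞; (ii) ∫_2^∞ dq/Φ(q) < ∞; (iii) ∫_1^∞ du/Ψ(u) < ∞. -/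
/-!
Pointwise on `(0,1]`, the integrand `φ(q, r) = q r - 1 + (1 - r)^q` of `Φ` is positive and
nondecreasing in `q`, and it is comparable with the integrand `ψ(q r)`, `ψ(x) = e^{-x} - 1 + x`,
of `Ψ`: `φ(q, r) ≤ ψ(q r)` since `1 - r ≤ e^{-r}`, and `ψ(q r) ≤ 2 φ(q, r)` for `q ≥ 8` since
`(1 - r)^q ≥ e^{-q r} (1 - 2 q r²)` and `x² e^{-x} ≤ 2 ψ(x)`. Both integrands are `O(q² r²)`, so
the second moment of `ν` makes them integrable. Hence `Φ ≤ Ψ ≤ 2 Φ` on `[8, ∞)`, so `1/Φ` and `1/Ψ`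
are integrable at infinity together, and (i) ⇔ (ii) is the integral test for the nonincreasing
function `1/Φ`.
-/

open MeasureTheory Real Set

section Antitone

variable {f g : ℝ → ℝ} {a b : ℝ}

theorem MonotoneOn.inv_antitoneOn {s : Set ℝ} (hf : MonotoneOn f s) (hpos : ∀ x ∈ s, 0 < f x) :
    AntitoneOn (fun x => (f x)⁻¹) s :=
  fun _ hx _ hy hxy => inv_anti₀ (hpos _ hx) (hf hx hy hxy)

theorem AntitoneOn.integrableOn_Ici_iff_of_le (hf : AntitoneOn f (Ici a)) (hab : a ≤ b) :
    IntegrableOn f (Ici a) ↔ IntegrableOn f (Ici b) := by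
  refine ⟨fun h => h.mono_set (Ici_subset_Ici.mpr hab), fun h => ?_⟩
  rw [← Icc_union_Ici_eq_Ici hab]
  exact ((hf.mono Icc_subset_Ici_self).integrableOn_isCompact isCompact_Icc).union h

theorem AntitoneOn.integrableOn_Ici_of_le (hf : AntitoneOn f (Ici a))
    (hf₀ : ∀ x ∈ Ici a, 0 ≤ f x) (hfg : ∀ x ∈ Ici a, f x ≤ g x) (hg : IntegrableOn g (Ici a)) :
    IntegrableOn f (Ici a) :=
  hg.mono' (aemeasurable_restrict_of_antitoneOn measurableSet_Ici hf).aestronglyMeasurable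
    (ae_restrict_of_forall_mem measurableSet_Ici fun x hx => by
      rw [Real.norm_of_nonneg (hf₀ x hx)]; exact hfg x hx)

theorem AntitoneOn.summable_comp_add_iff_integrableOn_Ici {N : ℕ} (hf : AntitoneOn f (Ici N))
    (hf₀ : ∀ x ∈ Ici (N : ℝ), 0 ≤ f x) :
    Summable (fun n : ℕ => f (n + N : ℕ)) ↔ IntegrableOn f (Ici N) := by
  have hf₀' : ∀ x ∈ Ioi (N : ℝ), 0 ≤ f x := fun x hx => hf₀ x (mem_Ici.mpr (le_of_lt hx))
  rw [integrableOn_Ici_iff_integrableOn_Ioi]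
  exact ⟨fun h => hf.integrableOn_Ioi_of_summable_comp_add h hf₀',
    fun h => (summable_nat_add_iff N).mpr (hf.summable_of_integrableOn_Ioi h hf₀')⟩

theorem integrableOn_inv_Ici_iff_of_le_of_le_mul (hf : MonotoneOn f (Ici a))
    (hg : MonotoneOn g (Ici a)) (hf₀ : ∀ x ∈ Ici a, 0 < f x) (hg₀ : ∀ x ∈ Ici a, 0 < g x)
    (hfg : ∀ x ∈ Ici a, f x ≤ g x) {C : ℝ} (hab : a ≤ b) (hgf : ∀ x ∈ Ici b, g x ≤ C * f x) :
    IntegrableOn (fun x => (f x)⁻¹) (Ici a) ↔ IntegrableOn (fun x => (g x)⁻¹) (Ici a) := by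
  have hf' := hf.inv_antitoneOn hf₀
  have hg' := hg.inv_antitoneOn hg₀
  refine ⟨fun h => hg'.integrableOn_Ici_of_le (fun x hx => (inv_pos.mpr (hg₀ x hx)).le)
    (fun x hx => inv_anti₀ (hf₀ x hx) (hfg x hx)) h, fun h => ?_⟩
  have hba : Ici b ⊆ Ici a := Ici_subset_Ici.mpr hab
  rw [hf'.integrableOn_Ici_iff_of_le hab]
  refine (hf'.mono hba).integrableOn_Ici_of_le (fun x hx => (inv_pos.mpr (hf₀ x (hba hx))).le)
    (fun x hx => ?_) ((h.mono_set hba).const_mul C)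
  have hfx := hf₀ x (hba hx)
  have hC : 0 < C := pos_of_mul_pos_left ((hg₀ x (hba hx)).trans_le (hgf x hx)) hfx.le
  calc (f x)⁻¹ = C * (C * f x)⁻¹ := by field_simp
    _ ≤ C * (g x)⁻¹ := by gcongr; exacts [hg₀ x (hba hx), hgf x hx]

end Antitone

noncomputable section

/-- `Φ(q) = ∫ phiKernel q r ν(dr)` and `Ψ(q) = ∫ psiKernel (q r) ν(dr)`. -/
def phiKernel (q r : ℝ) : ℝ := q * r - 1 + (1 - r) ^ q

def psiKernel (x : ℝ) : ℝ := exp (-x) - 1 + x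

section PsiKernel

variable {x : ℝ}

theorem psiKernel_nonneg (x : ℝ) : 0 ≤ psiKernel x := by
  have := add_one_le_exp (-x)
  unfold psiKernel; linarith

theorem psiKernel_pos (hx : x ≠ 0) : 0 < psiKernel x := by
  have := add_one_lt_exp (neg_ne_zero.mpr hx)
  unfold psiKernel; linarith

theorem psiKernel_le_sq (hx : 0 ≤ x) : psiKernel x ≤ x ^ 2 := by
  have h₁ : exp (-x) * exp x = 1 := by rw [← exp_add, neg_add_cancel, exp_zero]
  have h₂ := mul_le_mul_of_nonneg_left (add_one_le_exp x) (exp_pos (-x)).le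
  unfold psiKernel
  nlinarith [mul_nonneg (mul_nonneg (exp_pos (-x)).le hx) hx]

theorem psiKernel_monotoneOn : MonotoneOn psiKernel (Ici 0) := by
  intro x hx y _ hxy
  have h₁ : exp (-y) = exp (-x) * exp (x - y) := by rw [← exp_add]; ring_nf
  have h₂ := mul_le_mul_of_nonneg_left (add_one_le_exp (x - y)) (exp_pos (-x)).le
  have h₃ : exp (-x) ≤ 1 := exp_le_one_iff.mpr (neg_nonpos.mpr hx)
  unfold psiKernel
  nlinarith

/-- Equivalently `(x - 1) eˣ + 1 - x² / 2 ≥ 0`, whose derivative is `x (eˣ - 1) ≥ 0`. -/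
theorem sq_mul_exp_neg_le_two_mul_psiKernel (hx : 0 ≤ x) :
    x ^ 2 * exp (-x) ≤ 2 * psiKernel x := by
  set h : ℝ → ℝ := fun t => (t - 1) * exp t + 1 - t ^ 2 / 2
  have hderiv (t : ℝ) : HasDerivAt h (t * (exp t - 1)) t := by
    refine (((((hasDerivAt_id' t).sub_const 1).mul (hasDerivAt_exp t)).add_const 1).sub
      ((hasDerivAt_pow 2 t).div_const 2)).congr_deriv ?_
    push_cast; ring
  have hmono : MonotoneOn h (Ici 0) := by
    refine monotoneOn_of_deriv_nonneg (convex_Ici 0)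
      (fun t _ => (hderiv t).continuousAt.continuousWithinAt)
      (fun t _ => (hderiv t).differentiableAt.differentiableWithinAt) fun t ht => ?_
    rw [interior_Ici] at ht
    rw [(hderiv t).deriv]
    exact mul_nonneg (le_of_lt ht) (sub_nonneg.mpr (one_le_exp (le_of_lt ht)))
  have hh : 0 ≤ h x := by simpa [h] using hmono self_mem_Ici hx hx
  have hexp : exp x * exp (-x) = 1 := by rw [← exp_add, add_neg_cancel, exp_zero]
  have := mul_nonneg hh (exp_pos (-x)).le
  unfold psiKernel
  simp only [h] at this
  nlinarith

end PsiKernel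

section PhiKernel

variable {q q' r : ℝ}

theorem phiKernel_nonneg (hr : r ≤ 1) (hq : 1 ≤ q) : 0 ≤ phiKernel q r := by
  have := one_add_mul_self_le_rpow_one_add (s := -r) (by linarith) hq
  rw [← sub_eq_add_neg, mul_neg, ← sub_eq_add_neg] at this
  unfold phiKernel; linarith

theorem phiKernel_pos (hr₀ : 0 < r) (hr₁ : r ≤ 1) (hq : 1 < q) : 0 < phiKernel q r := by
  have := one_add_mul_self_lt_rpow_one_add (s := -r) (by linarith) (by linarith) hq
  rw [← sub_eq_add_neg, mul_neg, ← sub_eq_add_neg] at this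
  unfold phiKernel; linarith

theorem phiKernel_le_psiKernel (hr₁ : r ≤ 1) (hq : 0 ≤ q) :
    phiKernel q r ≤ psiKernel (q * r) := by
  have : (1 - r) ^ q ≤ exp (-(q * r)) :=
    calc (1 - r) ^ q ≤ exp (-r) ^ q := by
          gcongr; linarith [add_one_le_exp (-r)]
      _ = exp (-(q * r)) := by rw [← exp_mul]; ring_nf
  unfold phiKernel psiKernel; linarith

/-- With `a = 1 - r`: `a^q - a^q' ≤ a^q (q' - q) (-log a) ≤ a (-log a) (q' - q) ≤ r (q' - q)`. -/
theorem phiKernel_mono_left (hr₀ : 0 ≤ r) (hr₁ : r ≤ 1) (hq : 1 ≤ q) (hqq' : q ≤ q') :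
    phiKernel q r ≤ phiKernel q' r := by
  rcases hr₁.eq_or_lt with rfl | hr₁
  · simp only [phiKernel, sub_self, zero_rpow (by linarith : q ≠ 0),
      zero_rpow (by linarith : q' ≠ 0)]
    linarith
  set a := 1 - r
  have ha : 0 < a := by linarith
  have hlog : log a ≤ 0 := log_nonpos ha.le (by linarith)
  have hsplit : a ^ q' = a ^ q * a ^ (q' - q) := by rw [← rpow_add ha]; ring_nf
  have hexp : 1 + (q' - q) * log a ≤ a ^ (q' - q) := by
    rw [rpow_def_of_pos ha]; linarith [add_one_le_exp (log a * (q' - q))]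
  have hpow : a ^ q ≤ a := by
    simpa using rpow_le_rpow_of_exponent_ge ha (by linarith) hq
  have hentropy : a * -log a ≤ r := by
    have := one_sub_inv_le_log_of_pos ha
    have : a * (1 - a⁻¹) = a - 1 := by field_simp
    nlinarith
  have : a ^ q - a ^ q' ≤ r * (q' - q) := by
    rw [hsplit]
    nlinarith [mul_le_mul_of_nonneg_left hexp (rpow_nonneg ha.le q),
      mul_le_mul_of_nonneg_right hpow (by nlinarith : 0 ≤ -log a * (q' - q))]
  unfold phiKernel; nlinarith

theorem exp_neg_mul_mul_le_one_sub_rpow (hr₀ : 0 ≤ r) (hr₁ : r ≤ 1) (hq : 2 ≤ q) :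
    exp (-(q * r)) * (1 - 2 * q * r ^ 2) ≤ (1 - r) ^ q := by
  rcases le_or_gt (1 - 2 * q * r ^ 2) 0 with h | h
  · exact (mul_nonpos_of_nonneg_of_nonpos (exp_pos _).le h).trans (rpow_nonneg (by linarith) q)
  have hr : r < 1 / 2 := by nlinarith
  have ha : 0 < 1 - r := by linarith
  have hlog : -(r + 2 * r ^ 2) ≤ log (1 - r) := by
    have := one_sub_inv_le_log_of_pos ha
    have : r / (1 - r) ≤ r + 2 * r ^ 2 := by rw [div_le_iff₀ ha]; nlinarith
    have : 1 - (1 - r)⁻¹ = -(r / (1 - r)) := by field_simp; ring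
    linarith
  calc exp (-(q * r)) * (1 - 2 * q * r ^ 2)
      ≤ exp (-(q * r)) * exp (-(2 * q * r ^ 2)) := by
        gcongr; linarith [add_one_le_exp (-(2 * q * r ^ 2))]
    _ = exp (-(r + 2 * r ^ 2) * q) := by rw [← exp_add]; ring_nf
    _ ≤ exp (log (1 - r) * q) := by gcongr
    _ = (1 - r) ^ q := (rpow_def_of_pos ha q).symm

/-- With `x = q r`, the previous bound gives `φ ≥ ψ(x) - 2 x² e^{-x} / q ≥ (1 - 4 / q) ψ(x)`. -/
theorem psiKernel_le_two_mul_phiKernel (hr₀ : 0 ≤ r) (hr₁ : r ≤ 1) (hq : 8 ≤ q) :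
    psiKernel (q * r) ≤ 2 * phiKernel q r := by
  have hlow := exp_neg_mul_mul_le_one_sub_rpow hr₀ hr₁ (by linarith : 2 ≤ q)
  have hsq := sq_mul_exp_neg_le_two_mul_psiKernel (mul_nonneg (by linarith) hr₀ : 0 ≤ q * r)
  have hψ := psiKernel_nonneg (q * r)
  have hE := exp_pos (-(q * r))
  have : 2 * q * r ^ 2 * exp (-(q * r)) ≤ psiKernel (q * r) / 2 := by
    have hq' : 0 < q := by linarith
    rw [le_div_iff₀ (by norm_num), ← mul_le_mul_iff_of_pos_left hq']
    nlinarith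
  unfold phiKernel; unfold psiKernel at this hψ ⊢; nlinarith

end PhiKernel

section Measure

variable {ν : Measure ℝ} {q : ℝ}

theorem integral_pos_of_forall_mem_pos {s : Set ℝ} {f : ℝ → ℝ} (hν : ν ≠ 0) (hs : ν sᶜ = 0)
    (hf : Integrable f ν) (hpos : ∀ x ∈ s, 0 < f x) : 0 < ∫ x, f x ∂ν := by
  have hs' : ∀ᵐ x ∂ν, x ∈ s := mem_ae_iff.mpr hs
  have hsupp : ν (Function.support f)ᶜ = 0 := hs'.mono fun x hx => (hpos x hx).ne'
  rw [integral_pos_iff_support_of_nonneg_ae (hs'.mono fun x hx => (hpos x hx).le) hf,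
    measure_congr (ae_eq_univ.mpr hsupp)]
  exact Measure.measure_univ_pos.mpr hν

theorem integrable_sq_of_lintegral_lt_top (hmom : ∫⁻ r, ENNReal.ofReal (r ^ 2) ∂ν < ⊤) :
    Integrable (fun r => r ^ 2) ν :=
  ⟨(continuous_pow 2).aestronglyMeasurable,
    (hasFiniteIntegral_iff_ofReal (Filter.Eventually.of_forall fun r => sq_nonneg r)).mpr hmom⟩

theorem integrable_phiKernel (hsupp : ν (Ioc 0 1)ᶜ = 0)
    (hmom : ∫⁻ r, ENNReal.ofReal (r ^ 2) ∂ν < ⊤) (hq : 1 ≤ q) : Integrable (phiKernel q) ν := by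
  refine ((integrable_sq_of_lintegral_lt_top hmom).const_mul (q ^ 2)).mono'
    (by unfold phiKernel; fun_prop) ?_
  filter_upwards [mem_ae_iff.mpr hsupp] with r hr
  rw [Real.norm_of_nonneg (phiKernel_nonneg hr.2 hq)]
  calc phiKernel q r ≤ psiKernel (q * r) := phiKernel_le_psiKernel hr.2 (by linarith)
    _ ≤ (q * r) ^ 2 := psiKernel_le_sq (mul_nonneg (by linarith) hr.1.le)
    _ = q ^ 2 * r ^ 2 := by ring

theorem integrable_psiKernel_mul (hsupp : ν (Ioc 0 1)ᶜ = 0)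
    (hmom : ∫⁻ r, ENNReal.ofReal (r ^ 2) ∂ν < ⊤) (hq : 0 ≤ q) :
    Integrable (fun r => psiKernel (q * r)) ν := by
  refine ((integrable_sq_of_lintegral_lt_top hmom).const_mul (q ^ 2)).mono'
    (by unfold psiKernel; fun_prop) ?_
  filter_upwards [mem_ae_iff.mpr hsupp] with r hr
  rw [Real.norm_of_nonneg (psiKernel_nonneg _), ← mul_pow]
  exact psiKernel_le_sq (mul_nonneg hq hr.1.le)

theorem monotoneOn_integral_phiKernel (hsupp : ν (Ioc 0 1)ᶜ = 0)
    (hmom : ∫⁻ r, ENNReal.ofReal (r ^ 2) ∂ν < ⊤) :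
    MonotoneOn (fun q => ∫ r, phiKernel q r ∂ν) (Ici 1) := by
  intro q hq q' hq' hqq'
  refine integral_mono_ae (integrable_phiKernel hsupp hmom hq)
    (integrable_phiKernel hsupp hmom hq') ?_
  filter_upwards [mem_ae_iff.mpr hsupp] with r hr
  exact phiKernel_mono_left hr.1.le hr.2 hq hqq'

theorem monotoneOn_integral_psiKernel_mul (hsupp : ν (Ioc 0 1)ᶜ = 0)
    (hmom : ∫⁻ r, ENNReal.ofReal (r ^ 2) ∂ν < ⊤) :
    MonotoneOn (fun q => ∫ r, psiKernel (q * r) ∂ν) (Ici 0) := by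
  intro q hq q' hq' hqq'
  refine integral_mono_ae (integrable_psiKernel_mul hsupp hmom hq)
    (integrable_psiKernel_mul hsupp hmom hq') ?_
  filter_upwards [mem_ae_iff.mpr hsupp] with r hr
  exact psiKernel_monotoneOn (mul_nonneg hq hr.1.le) (mul_nonneg hq' hr.1.le)
    (mul_le_mul_of_nonneg_right hqq' hr.1.le)

theorem integral_phiKernel_pos (hν : ν ≠ 0) (hsupp : ν (Ioc 0 1)ᶜ = 0)
    (hmom : ∫⁻ r, ENNReal.ofReal (r ^ 2) ∂ν < ⊤) (hq : 1 < q) : 0 < ∫ r, phiKernel q r ∂ν :=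
  integral_pos_of_forall_mem_pos hν hsupp (integrable_phiKernel hsupp hmom hq.le)
    fun _ hr => phiKernel_pos hr.1 hr.2 hq

theorem integral_psiKernel_mul_pos (hν : ν ≠ 0) (hsupp : ν (Ioc 0 1)ᶜ = 0)
    (hmom : ∫⁻ r, ENNReal.ofReal (r ^ 2) ∂ν < ⊤) (hq : 0 < q) :
    0 < ∫ r, psiKernel (q * r) ∂ν :=
  integral_pos_of_forall_mem_pos hν hsupp (integrable_psiKernel_mul hsupp hmom hq.le)
    fun _ hr => psiKernel_pos (mul_pos hq hr.1).ne'

theorem integral_phiKernel_le_integral_psiKernel_mul (hsupp : ν (Ioc 0 1)ᶜ = 0)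
    (hmom : ∫⁻ r, ENNReal.ofReal (r ^ 2) ∂ν < ⊤) (hq : 1 ≤ q) :
    ∫ r, phiKernel q r ∂ν ≤ ∫ r, psiKernel (q * r) ∂ν := by
  refine integral_mono_ae (integrable_phiKernel hsupp hmom hq)
    (integrable_psiKernel_mul hsupp hmom (by linarith)) ?_
  filter_upwards [mem_ae_iff.mpr hsupp] with r hr
  exact phiKernel_le_psiKernel hr.2 (by linarith)

theorem integral_psiKernel_mul_le_two_mul_integral_phiKernel (hsupp : ν (Ioc 0 1)ᶜ = 0)
    (hmom : ∫⁻ r, ENNReal.ofReal (r ^ 2) ∂ν < ⊤) (hq : 8 ≤ q) :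
    ∫ r, psiKernel (q * r) ∂ν ≤ 2 * ∫ r, phiKernel q r ∂ν := by
  rw [← integral_const_mul]
  refine integral_mono_ae (integrable_psiKernel_mul hsupp hmom (by linarith))
    ((integrable_phiKernel hsupp hmom (by linarith)).const_mul 2) ?_
  filter_upwards [mem_ae_iff.mpr hsupp] with r hr
  exact psiKernel_le_two_mul_phiKernel hr.1.le hr.2 hq

end Measure

end

/-- For a nonzero measure `ν` on `(0,1]` with `∫ r² ν(dr) < ∞`,
with `Φ(q) = ∫ (qr - 1 + (1-r)^q) ν(dr)` (`q ≥ 1`) and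
`Ψ(q) = ∫ (e^{-qr} - 1 + qr) ν(dr)`: `Φ` is nondecreasing on `[1,∞)`,
`Φ(b) > 0` for every integer `b ≥ 2`, and the following are equivalent:
(i) `∑_{b≥2} Φ(b)⁻¹ < ∞`; (ii) `∫_2^∞ dq/Φ(q) < ∞`; (iii) `∫_1^∞ du/Ψ(u) < ∞`. -/
theorem stmt4
    (ν : Measure ℝ) (hν : ν ≠ 0) (hνsupp : ν (Set.Ioc 0 1)ᶜ = 0)
    (hνmom : ∫⁻ r, ENNReal.ofReal (r ^ 2) ∂ν < ⊤)
    (Φ Ψ : ℝ → ℝ)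
    (hΦ : ∀ q : ℝ, 1 ≤ q → Φ q = ∫ r, (q * r - 1 + (1 - r) ^ q) ∂ν)
    (hΨ : ∀ q : ℝ, Ψ q = ∫ r, (Real.exp (-q * r) - 1 + q * r) ∂ν) :
    MonotoneOn Φ (Set.Ici 1) ∧
    (∀ b : ℕ, 2 ≤ b → 0 < Φ (b : ℝ)) ∧
    ((Summable fun b : ℕ => (Φ ((b : ℝ) + 2))⁻¹) ↔
        IntegrableOn (fun q => (Φ q)⁻¹) (Set.Ici 2)) ∧
    (IntegrableOn (fun q => (Φ q)⁻¹) (Set.Ici 2) ↔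
        IntegrableOn (fun s => (Ψ s)⁻¹) (Set.Ici 1)) := by
  have hΦeq : EqOn Φ (fun q => ∫ r, phiKernel q r ∂ν) (Ici 1) := fun q hq => hΦ q hq
  have hΨeq : Ψ = fun q => ∫ r, psiKernel (q * r) ∂ν := by
    funext q; simp only [hΨ, psiKernel, neg_mul]
  subst hΨeq
  have h21 : Ici (2 : ℝ) ⊆ Ici 1 := Ici_subset_Ici.mpr one_le_two
  have hΦmono : MonotoneOn Φ (Ici 1) :=
    (monotoneOn_integral_phiKernel hνsupp hνmom).congr hΦeq.symm
  have hΦpos (q : ℝ) (hq : q ∈ Ici 2) : 0 < Φ q := by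
    rw [hΦeq (h21 hq)]
    exact integral_phiKernel_pos hν hνsupp hνmom (one_lt_two.trans_le hq)
  have hΨmono := (monotoneOn_integral_psiKernel_mul hνsupp hνmom).mono
    (Ici_subset_Ici.mpr zero_le_one)
  have hΨpos (q : ℝ) (hq : q ∈ Ici 1) : 0 < ∫ r, psiKernel (q * r) ∂ν :=
    integral_psiKernel_mul_pos hν hνsupp hνmom (zero_lt_one.trans_le hq)
  refine ⟨hΦmono, fun b hb => hΦpos b (mem_Ici.mpr (by exact_mod_cast hb)), ?_, ?_⟩
  · have := ((hΦmono.mono h21).inv_antitoneOn hΦpos).summable_comp_add_iff_integrableOn_Ici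
      (N := 2) fun q hq => (inv_pos.mpr (hΦpos q hq)).le
    exact_mod_cast this
  · rw [(hΨmono.inv_antitoneOn hΨpos).integrableOn_Ici_iff_of_le one_le_two]
    refine integrableOn_inv_Ici_iff_of_le_of_le_mul (hΦmono.mono h21) (hΨmono.mono h21) hΦpos
      (fun q hq => hΨpos q (h21 hq)) (fun q hq => ?_) (b := 8) (C := 2) (by norm_num)
      (fun q hq => ?_)
    · rw [hΦeq (h21 hq)]
      exact integral_phiKernel_le_integral_psiKernel_mul hνsupp hνmom (h21 hq)
    · rw [hΦeq (mem_Ici.mpr (by linarith [mem_Ici.mp hq]))]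
      exact integral_psiKernel_mul_le_two_mul_integral_phiKernel hνsupp hνmom hq
end

section
/- For t > 0 let μ_t be the measure on (0,∞) with density (4/t²) e^{−2x/t} with respect to Lebesgue measure. Then for every bounded continuous function f : (0,∞) → ℝ, the map t ↦ ∫ f dμ_t is differentiable on (0,∞) and its derivative at t equals (1/2) ∫∫ (f(x+y) − f(x) − f(y)) μ_t(dx) μ_t(dy). That is, (μ_t)_{t>0} solves Smoluchowski's coagulation equation with constant kernel K ≡ 1. -/
open MeasureTheory

/-- The measure `μ_t(dx) = (4/t²) e^{-2x/t} dx` on `(0,∞)`. -/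
noncomputable def fellerLevyMeasure (t : ℝ) : Measure ℝ :=
  (MeasureTheory.volume.restrict (Set.Ioi 0)).withDensity
    fun x => ENNReal.ofReal (4 / t ^ 2 * Real.exp (-2 * x / t))

open Set Real Filter
open scoped ENNReal

/-!
Write `μ_t = ρ_t · λ` with `ρ_t x = (4/t²) e^{-2x/t}` and `λ` Lebesgue measure on `(0,∞)`.
Since `ρ_t x · ρ_t y = (4/t²) ρ_t (x + y)` and `λ ∗ λ` has density `z ↦ z`, the convolution
`μ_t ∗ μ_t` has density `z ↦ (4/t²) z ρ_t z`. For a finite measure `μ` the coagulation term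
`∫∫ (f(x+y) - f x - f y) dμ dμ` equals `∫ f d(μ ∗ μ) - 2 μ(ℝ) ∫ f dμ`, and `μ_t` has mass `2/t`,
so the right-hand side is `∫ f(z) (2z/t² - 2/t) ρ_t z dz`. This is `∫ f ∂ₜρ_t`, and
differentiation under the integral sign is justified by the bound
`|∂ₛρ_s x| ≤ c (1 + x) e^{-x/t}` for `s` near `t`.
-/

namespace MeasureTheory.Measure

theorem map_withDensity_comp {α β : Type*} [MeasurableSpace α] [MeasurableSpace β]
    {μ : Measure α} {g : α → β} (hg : Measurable g) {c : β → ℝ≥0∞} (hc : Measurable c) :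
    (μ.withDensity (c ∘ g)).map g = (μ.map g).withDensity c := by
  ext s hs
  rw [map_apply hg hs, withDensity_apply _ (hg hs), withDensity_apply _ hs,
    setLIntegral_map hs hc hg, Function.comp_def]

theorem withDensity_conv_withDensity {M : Type*} [AddMonoid M] [MeasurableSpace M]
    [MeasurableAdd₂ M] {μ ν : Measure M} [SFinite μ] [SFinite ν] {a b c : M → ℝ≥0∞}
    (ha : Measurable a) (hb : Measurable b) (hc : Measurable c)
    (habc : ∀ x y, a x * b y = c (x + y)) :
    μ.withDensity a ∗ ν.withDensity b = (μ ∗ ν).withDensity c := by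
  have : (fun p : M × M ↦ a p.1 * b p.2) = c ∘ fun p ↦ p.1 + p.2 := funext fun p ↦ habc p.1 p.2
  rw [conv, conv, prod_withDensity ha hb, this, map_withDensity_comp measurable_add hc]

end MeasureTheory.Measure

open Measure in
theorem setLIntegral_Ioi_comp_const_add {h : ℝ → ℝ≥0∞} (hh : Measurable h) (x : ℝ) :
    ∫⁻ y in Ioi 0, h (x + y) = ∫⁻ z in Ioi x, h z := by
  have := (measurePreserving_add_left volume x).setLIntegral_comp_preimage
    (measurableSet_Ioi (a := x)) hh
  rwa [preimage_const_add_Ioi, sub_self] at this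

theorem volume_restrict_Ioi_conv_self :
    volume.restrict (Ioi (0:ℝ)) ∗ volume.restrict (Ioi 0) =
      (volume.restrict (Ioi 0)).withDensity ENNReal.ofReal := by
  refine Measure.ext_of_lintegral _ fun h hh ↦ ?_
  let T : ℝ × ℝ → ℝ≥0∞ := {p : ℝ × ℝ | p.2 < p.1}.indicator fun p ↦ h p.1
  have hT : Measurable T :=
    (hh.comp measurable_fst).indicator (measurableSet_lt measurable_snd measurable_fst)
  calc ∫⁻ z, h z ∂(volume.restrict (Ioi 0) ∗ volume.restrict (Ioi 0))
      = ∫⁻ x in Ioi 0, ∫⁻ z, T (z, x) := by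
        rw [Measure.lintegral_conv hh]
        refine lintegral_congr fun x ↦ ?_
        rw [setLIntegral_Ioi_comp_const_add hh, ← lintegral_indicator measurableSet_Ioi]
        rfl
    _ = ∫⁻ z, ∫⁻ x in Ioi 0, T (z, x) :=
        lintegral_lintegral_swap (hT.comp measurable_swap).aemeasurable
    _ = ∫⁻ z, (Ioi 0).indicator (fun z ↦ ENNReal.ofReal z * h z) z := by
        refine lintegral_congr fun z ↦ ?_
        have hslice : (fun x ↦ T (z, x)) = (Iio z).indicator fun _ ↦ h z := rfl
        rw [hslice, lintegral_indicator_const measurableSet_Iio,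
          Measure.restrict_apply measurableSet_Iio]
        by_cases hz : z ∈ Ioi 0
        · rw [indicator_of_mem hz, Iio_inter_Ioi, Real.volume_Ioo, sub_zero, mul_comm]
        · rw [indicator_of_notMem hz, Iio_inter_Ioi, Ioo_eq_empty hz, measure_empty, mul_zero]
    _ = ∫⁻ z, h z ∂(volume.restrict (Ioi 0)).withDensity ENNReal.ofReal := by
        rw [lintegral_indicator measurableSet_Ioi,
          lintegral_withDensity_eq_lintegral_mul _ ENNReal.measurable_ofReal hh]
        rfl

theorem integral_integral_add_sub_sub {M : Type*} [AddMonoid M] [MeasurableSpace M]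
    [MeasurableAdd₂ M] {μ : Measure M} [IsFiniteMeasure μ] {f : M → ℝ}
    (hf : Integrable f μ) (hf_conv : Integrable f (μ ∗ μ)) :
    ∫ x, ∫ y, (f (x + y) - f x - f y) ∂μ ∂μ
      = ∫ z, f z ∂(μ ∗ μ) - 2 * μ.real univ * ∫ x, f x ∂μ := by
  have hadd : Integrable (fun p : M × M ↦ f (p.1 + p.2)) (μ.prod μ) :=
    (integrable_map_measure hf_conv.1 (by fun_prop)).mp hf_conv
  have hfst := hf.comp_fst μ
  rw [integral_integral ((hadd.sub hfst).sub (hf.comp_snd μ)),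
    integral_sub (by exact hadd.sub hfst) (hf.comp_snd μ), integral_sub hadd hfst,
    integral_fun_fst, integral_fun_snd, Measure.conv, integral_map (by fun_prop) hf_conv.1,
    smul_eq_mul]
  ring

section WithDensityOfReal

variable {α : Type*} [MeasurableSpace α] {μ : Measure α} {d : α → ℝ}

theorem integral_withDensity_ofReal (hd : Measurable d) (hd0 : 0 ≤ᵐ[μ] d) (g : α → ℝ) :
    ∫ x, g x ∂μ.withDensity (fun x ↦ ENNReal.ofReal (d x)) = ∫ x, d x * g x ∂μ := by
  rw [integral_withDensity_eq_integral_toReal_smul hd.ennreal_ofReal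
    (ae_of_all _ fun _ ↦ ENNReal.ofReal_lt_top)]
  refine integral_congr_ae (hd0.mono fun x hx ↦ ?_)
  simp only [ENNReal.toReal_ofReal hx, smul_eq_mul]

theorem integrable_withDensity_ofReal_iff (hd : Measurable d) (hd0 : 0 ≤ᵐ[μ] d) {g : α → ℝ} :
    Integrable g (μ.withDensity fun x ↦ ENNReal.ofReal (d x))
      ↔ Integrable (fun x ↦ d x * g x) μ := by
  rw [integrable_withDensity_iff_integrable_smul' hd.ennreal_ofReal
    (ae_of_all _ fun _ ↦ ENNReal.ofReal_lt_top)]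
  refine integrable_congr (hd0.mono fun x hx ↦ ?_)
  simp only [ENNReal.toReal_ofReal hx, smul_eq_mul]

end WithDensityOfReal

theorem ContinuousOn.integrable_of_absolutelyContinuous_restrict {α : Type*}
    [TopologicalSpace α] [MeasurableSpace α] [OpensMeasurableSpace α] {μ ν : Measure α}
    [IsFiniteMeasure μ] {s : Set α} {f : α → ℝ} (hf : ContinuousOn f s) (hs : MeasurableSet s)
    (hμ : μ ≪ ν.restrict s) {C : ℝ} (hC : ∀ x ∈ s, |f x| ≤ C) : Integrable f μ :=
  Integrable.of_bound ((hf.aestronglyMeasurable hs).mono_ac hμ) C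
    (hμ.ae_le (ae_restrict_of_forall_mem hs hC))

theorem integrableOn_Ioi_mul_exp_neg_mul {b : ℝ} (hb : 0 < b) :
    IntegrableOn (fun x ↦ x * exp (-b * x)) (Ioi 0) := by
  simpa [rpow_one] using
    integrableOn_rpow_mul_exp_neg_mul_rpow (by norm_num : (-1 : ℝ) < 1) one_pos hb

noncomputable def fellerDensity (t x : ℝ) : ℝ := 4 / t ^ 2 * exp (-2 * x / t)

theorem fellerLevyMeasure_eq_withDensity (t : ℝ) :
    fellerLevyMeasure t
      = (volume.restrict (Ioi 0)).withDensity fun x ↦ ENNReal.ofReal (fellerDensity t x) :=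
  rfl

theorem fellerDensity_nonneg (t x : ℝ) : 0 ≤ fellerDensity t x := by
  unfold fellerDensity; positivity

@[fun_prop]
theorem measurable_fellerDensity (t : ℝ) : Measurable (fellerDensity t) := by
  unfold fellerDensity; fun_prop

theorem integral_fellerLevyMeasure (t : ℝ) (g : ℝ → ℝ) :
    ∫ x, g x ∂fellerLevyMeasure t = ∫ x in Ioi 0, fellerDensity t x * g x :=
  integral_withDensity_ofReal (measurable_fellerDensity t)
    (ae_of_all _ (fellerDensity_nonneg t)) g

theorem fellerDensity_mul_fellerDensity (t x y : ℝ) :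
    fellerDensity t x * fellerDensity t y = 4 / t ^ 2 * fellerDensity t (x + y) := by
  simp only [fellerDensity, mul_mul_mul_comm, ← exp_add]
  ring_nf

theorem integrableOn_fellerDensity {t : ℝ} (ht : 0 < t) :
    IntegrableOn (fellerDensity t) (Ioi 0) := by
  have h : IntegrableOn (fun x ↦ 4 / t ^ 2 * exp (-(2 / t) * x)) (Ioi 0) :=
    (exp_neg_integrableOn_Ioi 0 (div_pos two_pos ht)).const_mul _
  refine h.congr_fun (fun x _ ↦ ?_) measurableSet_Ioi
  simp only [fellerDensity]; ring_nf

theorem integral_fellerDensity {t : ℝ} (ht : 0 < t) :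
    ∫ x in Ioi 0, fellerDensity t x = 2 / t := by
  have h : ∀ x, -2 * x / t = -(2 / t) * x := fun x ↦ by ring
  simp only [fellerDensity, h, integral_const_mul,
    integral_exp_mul_Ioi (neg_neg_of_pos (div_pos two_pos ht)) 0]
  field_simp
  norm_num

theorem isFiniteMeasure_fellerLevyMeasure {t : ℝ} (ht : 0 < t) :
    IsFiniteMeasure (fellerLevyMeasure t) :=
  isFiniteMeasure_withDensity_ofReal (integrableOn_fellerDensity ht).2

theorem measureReal_univ_fellerLevyMeasure {t : ℝ} (ht : 0 < t) :
    (fellerLevyMeasure t).real univ = 2 / t :=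
  calc (fellerLevyMeasure t).real univ = ∫ _, (1 : ℝ) ∂fellerLevyMeasure t := by simp
    _ = 2 / t := by simp only [integral_fellerLevyMeasure, mul_one, integral_fellerDensity ht]

theorem fellerLevyMeasure_conv_self (t : ℝ) :
    fellerLevyMeasure t ∗ fellerLevyMeasure t = (volume.restrict (Ioi 0)).withDensity
      fun z ↦ ENNReal.ofReal (z * (4 / t ^ 2 * fellerDensity t z)) := by
  have hprod (x y : ℝ) : ENNReal.ofReal (fellerDensity t x) * ENNReal.ofReal (fellerDensity t y)
      = ENNReal.ofReal (4 / t ^ 2 * fellerDensity t (x + y)) := by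
    rw [← ENNReal.ofReal_mul (fellerDensity_nonneg t x), fellerDensity_mul_fellerDensity]
  rw [fellerLevyMeasure_eq_withDensity, Measure.withDensity_conv_withDensity
    (c := fun z ↦ ENNReal.ofReal (4 / t ^ 2 * fellerDensity t z)) (by fun_prop) (by fun_prop)
    (by fun_prop) hprod, volume_restrict_Ioi_conv_self,
    ← withDensity_mul _ ENNReal.measurable_ofReal (by fun_prop)]
  congr 1
  funext z
  rw [Pi.mul_apply, ← ENNReal.ofReal_mul' (by have := fellerDensity_nonneg t z; positivity)]

theorem hasDerivAt_fellerDensity {s : ℝ} (hs : s ≠ 0) (x : ℝ) :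
    HasDerivAt (fun s ↦ fellerDensity s x) ((2 * x / s ^ 2 - 2 / s) * fellerDensity s x) s := by
  have h := ((hasDerivAt_const s (4 : ℝ)).div ((hasDerivAt_id' s).pow 2) (pow_ne_zero 2 hs)).mul
    ((hasDerivAt_const s (-2 * x)).div (hasDerivAt_id' s) hs).exp
  refine h.congr_deriv ?_
  simp only [fellerDensity, Pi.div_apply, Pi.pow_apply]
  field_simp
  ring

theorem abs_deriv_fellerDensity_le {t s x : ℝ} (ht : 0 < t) (hs : s ∈ Metric.ball t (t / 2))
    (hx : 0 < x) :
    |(2 * x / s ^ 2 - 2 / s) * fellerDensity s x|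
      ≤ (8 * x / t ^ 2 + 4 / t) * (16 / t ^ 2 * exp (-x / t)) := by
  rw [Metric.mem_ball, dist_eq, abs_lt] at hs
  have hts : t / 2 ≤ s := by linarith
  have hs0 : 0 < s := by linarith
  have hcoef : |2 * x / s ^ 2 - 2 / s| ≤ 8 * x / t ^ 2 + 4 / t :=
    calc |2 * x / s ^ 2 - 2 / s| ≤ 2 * x / s ^ 2 + 2 / s := by
          rw [abs_le]
          constructor <;>
            nlinarith [div_nonneg (by linarith : 0 ≤ 2 * x) (sq_nonneg s), div_pos two_pos hs0]
      _ ≤ 2 * x / (t / 2) ^ 2 + 2 / (t / 2) := by gcongr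
      _ = 8 * x / t ^ 2 + 4 / t := by field_simp; ring
  have hdens : fellerDensity s x ≤ 16 / t ^ 2 * exp (-x / t) := by
    have hexp : -2 * x / s ≤ -x / t := by rw [div_le_div_iff₀ hs0 ht]; nlinarith
    calc fellerDensity s x ≤ 4 / (t / 2) ^ 2 * exp (-x / t) := by
          unfold fellerDensity; gcongr
      _ = 16 / t ^ 2 * exp (-x / t) := by field_simp; ring
  rw [abs_mul, abs_of_nonneg (fellerDensity_nonneg s x)]
  exact mul_le_mul hcoef hdens (fellerDensity_nonneg s x) (by positivity)

theorem hasDerivAt_integral_fellerDensity_mul {f : ℝ → ℝ}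
    (hf : AEStronglyMeasurable f (volume.restrict (Ioi 0))) {C : ℝ}
    (hC : ∀ x ∈ Ioi (0 : ℝ), |f x| ≤ C) {t : ℝ} (ht : 0 < t) :
    HasDerivAt (fun s ↦ ∫ x in Ioi 0, fellerDensity s x * f x)
      (∫ x in Ioi 0, (2 * x / t ^ 2 - 2 / t) * fellerDensity t x * f x) t := by
  have hC_ae : ∀ᵐ x ∂volume.restrict (Ioi 0), |f x| ≤ C :=
    ae_restrict_of_forall_mem measurableSet_Ioi hC
  have hint : Integrable (fun x ↦ fellerDensity t x * f x) (volume.restrict (Ioi 0)) := by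
    refine ((integrableOn_fellerDensity ht).mul_const C).mono'
      ((measurable_fellerDensity t).aestronglyMeasurable.mul hf) ?_
    filter_upwards [hC_ae] with x hx
    rw [norm_mul, Real.norm_of_nonneg (fellerDensity_nonneg t x), Real.norm_eq_abs]
    exact mul_le_mul_of_nonneg_left hx (fellerDensity_nonneg t x)
  have hbound : IntegrableOn
      (fun x ↦ (8 * x / t ^ 2 + 4 / t) * (16 / t ^ 2 * exp (-x / t)) * C) (Ioi 0) := by
    have h := ((integrableOn_Ioi_mul_exp_neg_mul (one_div_pos.2 ht)).const_mul
      (128 / t ^ 4 * C)).add ((exp_neg_integrableOn_Ioi 0 (one_div_pos.2 ht)).const_mul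
      (64 / t ^ 3 * C))
    refine IntegrableOn.congr_fun h (fun x _ ↦ ?_) measurableSet_Ioi
    simp only [Pi.add_apply]
    field_simp
    ring_nf
  refine (hasDerivAt_integral_of_dominated_loc_of_deriv_le
    (F' := fun s x ↦ (2 * x / s ^ 2 - 2 / s) * fellerDensity s x * f x)
    (Metric.ball_mem_nhds t (half_pos ht))
    (Eventually.of_forall fun s ↦ (measurable_fellerDensity s).aestronglyMeasurable.mul hf) hint
    ((by fun_prop : Measurable fun x ↦
      (2 * x / t ^ 2 - 2 / t) * fellerDensity t x).aestronglyMeasurable.mul hf)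
    ?_ hbound ?_).2
  · filter_upwards [ae_restrict_mem measurableSet_Ioi, hC_ae] with x hx hfx s hs
    rw [norm_mul, Real.norm_eq_abs, Real.norm_eq_abs]
    have hderiv := abs_deriv_fellerDensity_le ht hs hx
    exact mul_le_mul hderiv hfx (abs_nonneg _) ((abs_nonneg _).trans hderiv)
  · refine Eventually.of_forall fun x s hs ↦ ?_
    have hs0 : s ≠ 0 := by
      rw [Metric.mem_ball, dist_eq, abs_lt] at hs; linarith
    exact (hasDerivAt_fellerDensity hs0 x).mul_const (f x)

theorem half_integral_integral_coagulation_fellerLevyMeasure {f : ℝ → ℝ}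
    (hf_cont : ContinuousOn f (Ioi 0)) {C : ℝ} (hC : ∀ x ∈ Ioi (0 : ℝ), |f x| ≤ C) {t : ℝ}
    (ht : 0 < t) :
    1 / 2 * ∫ x, (∫ y, (f (x + y) - f x - f y) ∂fellerLevyMeasure t) ∂fellerLevyMeasure t
      = ∫ x in Ioi 0, (2 * x / t ^ 2 - 2 / t) * fellerDensity t x * f x := by
  have := isFiniteMeasure_fellerLevyMeasure ht
  have hconv_nonneg :
      0 ≤ᵐ[volume.restrict (Ioi 0)] fun z ↦ z * (4 / t ^ 2 * fellerDensity t z) :=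
    (ae_restrict_mem measurableSet_Ioi).mono fun z (hz : 0 < z) ↦
      mul_nonneg hz.le (mul_nonneg (by positivity) (fellerDensity_nonneg t z))
  have hf : Integrable f (fellerLevyMeasure t) :=
    hf_cont.integrable_of_absolutelyContinuous_restrict (μ := fellerLevyMeasure t)
      measurableSet_Ioi (withDensity_absolutelyContinuous _ _) hC
  have hf_conv : Integrable f (fellerLevyMeasure t ∗ fellerLevyMeasure t) := by
    refine hf_cont.integrable_of_absolutelyContinuous_restrict (ν := volume)
      measurableSet_Ioi ?_ hC
    rw [fellerLevyMeasure_conv_self]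
    exact withDensity_absolutelyContinuous _ _
  have hf' : IntegrableOn (fun x ↦ fellerDensity t x * f x) (Ioi 0) :=
    (integrable_withDensity_ofReal_iff (measurable_fellerDensity t)
      (ae_of_all _ (fellerDensity_nonneg t))).1 hf
  have hf_conv' : IntegrableOn (fun x ↦ x * (4 / t ^ 2 * fellerDensity t x) * f x) (Ioi 0) := by
    rw [fellerLevyMeasure_conv_self] at hf_conv
    exact (integrable_withDensity_ofReal_iff (by fun_prop) hconv_nonneg).1 hf_conv
  have hpt : (fun x ↦ (2 * x / t ^ 2 - 2 / t) * fellerDensity t x * f x) = fun x ↦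
      1 / 2 * (x * (4 / t ^ 2 * fellerDensity t x) * f x) - 2 / t * (fellerDensity t x * f x) := by
    funext x; ring
  rw [integral_integral_add_sub_sub hf hf_conv, measureReal_univ_fellerLevyMeasure ht,
    fellerLevyMeasure_conv_self, integral_withDensity_ofReal (by fun_prop) hconv_nonneg,
    integral_fellerLevyMeasure, hpt, integral_sub (hf_conv'.const_mul _) (hf'.const_mul _),
    integral_const_mul, integral_const_mul]
  ring

/-- The family `μ_t(dx) = (4/t²) e^{-2x/t} dx` solves
Smoluchowski's coagulation equation with constant kernel `K ≡ 1`: for every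
bounded continuous `f : (0,∞) → ℝ`, the map `t ↦ ∫ f dμ_t` is differentiable
on `(0,∞)` with derivative `(1/2) ∫∫ (f(x+y) - f(x) - f(y)) μ_t(dx) μ_t(dy)`. -/
theorem stmt10
    (f : ℝ → ℝ) (hf_cont : ContinuousOn f (Set.Ioi 0))
    (hf_bdd : ∃ C : ℝ, ∀ x ∈ Set.Ioi (0 : ℝ), |f x| ≤ C) :
    ∀ t : ℝ, 0 < t →
      HasDerivAt (fun s : ℝ => ∫ x, f x ∂(fellerLevyMeasure s))
        ((1 / 2) *
          ∫ x, (∫ y, (f (x + y) - f x - f y) ∂(fellerLevyMeasure t))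
            ∂(fellerLevyMeasure t)) t := by
  intro t ht
  obtain ⟨C, hC⟩ := hf_bdd
  rw [half_integral_integral_coagulation_fellerLevyMeasure hf_cont hC ht]
  simp only [integral_fellerLevyMeasure]
  exact hasDerivAt_integral_fellerDensity_mul
    (hf_cont.aestronglyMeasurable measurableSet_Ioi) hC ht
end

section
/- Let h : ℝ → ℝ be a truncation function (nondecreasing, 1-Lipschitz, |h(x)| ≤ min(|x|, 1), h(x) = x on [−δ, δ] for some δ > 0), π a Borel measure on (0,∞) with ∫ min(r, r²) π(dr) < ∞, and (ν^{(a)})_{a>0} measures on (0,∞) supported on (0,a] with ∫ r² ν^{(a)}(dr) < ∞ satisfying Assumption (H). For 0 ≤ y ≤ y' ≤ a define γ_a(y, y') = ∫ ν^{(a)}(dr) ∫_0^a du · h(r(1_{u ≤ y} − y/a)) · h(r(1_{u ≤ y'} − y'/a)). Then: (i) |γ_a(y, y')| ≤ (y + y') ∫ ν^{(a)}(dr) min(r, r²) for all 0 ≤ y ≤ y' ≤ a; and (ii) for every M > 0, sup_{0 ≤ y ≤ y' ≤ M} | γ_a(y, y') − y ∫ π(dr) h(r)² | → 0 as a → ∞.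 -/
open MeasureTheory Filter

/-- The modified second characteristic (with truncation function `h`) of a pair
of coordinates of the rescaled generalized Fleming-Viot process associated with
the measure `ν` on `(0,a]`:
`γ_a(y,y') = ∫ ν(dr) ∫_0^a du h(r(1_{u≤y} - y/a)) h(r(1_{u≤y'} - y'/a))`. -/
noncomputable def gammaChar (h : ℝ → ℝ) (ν : Measure ℝ) (a y y' : ℝ) : ℝ :=
  ∫ r, (∫ u in Set.Ioc (0 : ℝ) a,
      (h (r * ((if u ≤ y then (1 : ℝ) else 0) - y / a)) *
        h (r * ((if u ≤ y' then (1 : ℝ) else 0) - y' / a)))) ∂ν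

/-! Splitting the `u`-integral at `y` and `y'` turns `γ_a(y, y')` into the `ν^{(a)}`-integral of
an explicit three-term expression in `h`. Since `|h x| ≤ min(|x|, 1)` and `h` is 1-Lipschitz, this
expression is bounded by `(y + y') min(r, r²)`, and for `y' ≤ M ≤ a` it differs from `y h(r)²` by
at most `M((R + 4)M/a + χ_R(r)) min(r, r²)`, where `χ_R` is a continuous cutoff of `[R, ∞)`.
Assumption (H) makes the `ν^{(a)}`-integrals of `min(r, r²)`, `χ_R(r) min(r, r²)` and `h(r)²`
converge to the corresponding `π`-integrals, and `∫ χ_R(r) min(r, r²) π(dr) → 0` as `R → ∞` by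
dominated convergence. -/

open Set Topology

lemma setIntegral_Ioc_eq_of_eqOn {f : ℝ → ℝ} {s t c : ℝ} (hst : s ≤ t)
    (hf : EqOn f (fun _ => c) (Ioc s t)) :
    IntegrableOn f (Ioc s t) ∧ ∫ u in Ioc s t, f u = (t - s) * c := by
  refine ⟨(integrableOn_const measure_Ioc_lt_top.ne).congr_fun hf.symm measurableSet_Ioc, ?_⟩
  rw [setIntegral_congr_fun measurableSet_Ioc hf, setIntegral_const,
    Real.volume_real_Ioc_of_le hst, smul_eq_mul]

lemma setIntegral_Ioc_ite_ite (f : ℝ → ℝ → ℝ) {a y y' : ℝ}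
    (hy : 0 ≤ y) (hyy' : y ≤ y') (hy'a : y' ≤ a) :
    ∫ u in Ioc 0 a, f (if u ≤ y then 1 else 0) (if u ≤ y' then 1 else 0)
      = y * f 1 1 + (y' - y) * f 0 1 + (a - y') * f 0 0 := by
  set g : ℝ → ℝ := fun u => f (if u ≤ y then 1 else 0) (if u ≤ y' then 1 else 0)
  obtain ⟨hi₁, e₁⟩ := setIntegral_Ioc_eq_of_eqOn (f := g) (c := f 1 1) hy fun u hu => by
    simp [g, hu.2, hu.2.trans hyy']
  obtain ⟨hi₂, e₂⟩ := setIntegral_Ioc_eq_of_eqOn (f := g) (c := f 0 1) hyy' fun u hu => by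
    simp [g, not_le.2 hu.1, hu.2]
  obtain ⟨hi₃, e₃⟩ := setIntegral_Ioc_eq_of_eqOn (f := g) (c := f 0 0) hy'a fun u hu => by
    simp [g, not_le.2 (hyy'.trans_lt hu.1), not_le.2 hu.1]
  have hunion := Ioc_union_Ioc_eq_Ioc hyy' hy'a
  rw [← Ioc_union_Ioc_eq_Ioc hy (hyy'.trans hy'a),
    setIntegral_union (Ioc_disjoint_Ioc_of_le le_rfl) measurableSet_Ioc hi₁
      (hunion ▸ hi₂.union hi₃),
    ← hunion, setIntegral_union (Ioc_disjoint_Ioc_of_le le_rfl) measurableSet_Ioc hi₂ hi₃,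
    e₁, e₂, e₃]
  ring

def tailCutoff (R r : ℝ) : ℝ := min 1 (max 0 (r - R))

@[fun_prop]
lemma continuous_tailCutoff (R : ℝ) : Continuous (tailCutoff R) := by
  unfold tailCutoff; fun_prop

lemma tailCutoff_nonneg (R r : ℝ) : 0 ≤ tailCutoff R r :=
  le_min zero_le_one (le_max_left _ _)

lemma tailCutoff_le_one (R r : ℝ) : tailCutoff R r ≤ 1 := min_le_left _ _

lemma abs_tailCutoff_mul_le (R r x : ℝ) : |tailCutoff R r * x| ≤ |x| := by
  rw [abs_mul, abs_of_nonneg (tailCutoff_nonneg R r)]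
  exact mul_le_of_le_one_left (abs_nonneg x) (tailCutoff_le_one R r)

lemma tailCutoff_eq_zero {R r : ℝ} (hr : r ≤ R) : tailCutoff R r = 0 := by
  simp [tailCutoff, hr]

lemma tailCutoff_eq_one {R r : ℝ} (hr : R + 1 ≤ r) : tailCutoff R r = 1 := by
  rw [tailCutoff, max_eq_right (by linarith), min_eq_left (by linarith)]

lemma min_sq_eq_mul_min_one {r : ℝ} (hr : 0 ≤ r) : min r (r ^ 2) = r * min r 1 := by
  rw [mul_min_of_nonneg _ _ hr, mul_one, min_comm, sq]

lemma abs_mul_le_mul_min_sq {x z r c : ℝ} (hx : |x| ≤ r * c) (hz : |z| ≤ min r 1) :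
    |x * z| ≤ c * min r (r ^ 2) := by
  have hr : 0 ≤ r := (abs_nonneg z).trans (hz.trans (min_le_left _ _))
  rw [abs_mul, min_sq_eq_mul_min_one hr]
  calc |x| * |z| ≤ (r * c) * min r 1 :=
        mul_le_mul hx hz (abs_nonneg _) ((abs_nonneg x).trans hx)
    _ = c * (r * min r 1) := by ring

/-- For `r ≤ R + 1` the left side is at most `c r² ≤ (R + 1) c min(r, r²)`; beyond, the cutoff
is `1`. -/
lemma mul_min_le_tailCutoff {r c R : ℝ} (hr : 0 ≤ r) (hc : 0 ≤ c) (hR : 0 ≤ R) :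
    r * min (r * c) 1 ≤ (R + 1) * c * min r (r ^ 2) + tailCutoff R r * min r (r ^ 2) := by
  have hκ : 0 ≤ min r (r ^ 2) := le_min hr (sq_nonneg r)
  rcases le_total r (R + 1) with hrR | hrR
  · have hsq : r * r ≤ (R + 1) * min r (r ^ 2) := by
      rw [min_sq_eq_mul_min_one hr]
      rcases le_total r 1 with hr1 | hr1
      · rw [min_eq_left hr1]; nlinarith
      · rw [min_eq_right hr1]; nlinarith
    calc r * min (r * c) 1 ≤ r * (r * c) := mul_le_mul_of_nonneg_left (min_le_left _ _) hr
      _ ≤ (R + 1) * c * min r (r ^ 2) := by nlinarith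
      _ ≤ _ := le_add_of_nonneg_right (mul_nonneg (tailCutoff_nonneg R r) hκ)
  · rw [tailCutoff_eq_one hrR, one_mul, min_eq_left (show r ≤ r ^ 2 by nlinarith)]
    calc r * min (r * c) 1 ≤ r * 1 := mul_le_mul_of_nonneg_left (min_le_right _ _) hr
      _ ≤ _ := by nlinarith [mul_nonneg (mul_nonneg (by linarith : (0:ℝ) ≤ R + 1) hc) hr]

lemma abs_mul_le_min_sq {x z r : ℝ} (hx : |x| ≤ min r 1) (hz : |z| ≤ min r 1) :
    |x * z| ≤ min r (r ^ 2) := by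
  simpa using
    abs_mul_le_mul_min_sq (c := 1) ((hx.trans (min_le_left _ _)).trans_eq (mul_one r).symm) hz

lemma abs_mul_add_mul_add_mul_le {p q s X Y Z : ℝ} (hp : 0 ≤ p) (hq : 0 ≤ q) (hs : 0 ≤ s) :
    |p * X + q * Y + s * Z| ≤ p * |X| + q * |Y| + s * |Z| := by
  refine (abs_add_three _ _ _).trans_eq ?_
  rw [abs_mul, abs_mul, abs_mul, abs_of_nonneg hp, abs_of_nonneg hq, abs_of_nonneg hs]

lemma abs_mul_one_sub_le {r t : ℝ} (hr : 0 ≤ r) (ht : t ∈ Icc 0 1) : |r * (1 - t)| ≤ r := by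
  rw [abs_of_nonneg (mul_nonneg hr (by linarith [ht.2]))]; nlinarith [ht.1]

lemma abs_mul_zero_sub {r t : ℝ} (hr : 0 ≤ r) (ht : 0 ≤ t) : |r * (0 - t)| = r * t := by
  rw [zero_sub, mul_neg, abs_neg, abs_of_nonneg (mul_nonneg hr ht)]

lemma div_mem_Icc {y a : ℝ} (ha : 0 < a) (hy : 0 ≤ y) (hya : y ≤ a) : y / a ∈ Icc 0 1 :=
  ⟨div_nonneg hy ha.le, (div_le_one ha).2 hya⟩

lemma sub_mul_div_le {a y y' : ℝ} (ha : 0 < a) (hy : 0 ≤ y) (hy' : 0 ≤ y') :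
    (a - y') * (y / a) ≤ y := by
  rw [mul_div_assoc', div_le_iff₀ ha]; nlinarith

/-- The `u`-integral in `gammaChar`, evaluated: the pair `(1_{u ≤ y}, 1_{u ≤ y'})` is
`(1,1)`, `(0,1)`, `(0,0)` on `(0,y]`, `(y,y']`, `(y',a]`. -/
noncomputable def gammaIntegrand (h : ℝ → ℝ) (a y y' r : ℝ) : ℝ :=
  let f (s t : ℝ) := h (r * (s - y / a)) * h (r * (t - y' / a))
  y * f 1 1 + (y' - y) * f 0 1 + (a - y') * f 0 0

lemma gammaChar_eq_integral_gammaIntegrand (h : ℝ → ℝ) (ν : Measure ℝ) {a y y' : ℝ}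
    (hy : 0 ≤ y) (hyy' : y ≤ y') (hy'a : y' ≤ a) :
    gammaChar h ν a y y' = ∫ r, gammaIntegrand h a y y' r ∂ν :=
  integral_congr_ae <| ae_of_all _ fun r =>
    setIntegral_Ioc_ite_ite (fun s t => h (r * (s - y / a)) * h (r * (t - y' / a))) hy hyy' hy'a

lemma continuous_gammaIntegrand {h : ℝ → ℝ} (hh : Continuous h) (a y y' : ℝ) :
    Continuous (gammaIntegrand h a y y') := by
  unfold gammaIntegrand; fun_prop

section Truncation

variable {h : ℝ → ℝ} (h_bdd : ∀ x : ℝ, |h x| ≤ min |x| 1)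
include h_bdd

lemma abs_le_min_one_of_abs_le {x r : ℝ} (hx : |x| ≤ r) : |h x| ≤ min r 1 :=
  (h_bdd x).trans (min_le_min_right 1 hx)

lemma abs_mul_zero_sub_le {r t : ℝ} (hr : 0 ≤ r) (ht : 0 ≤ t) : |h (r * (0 - t))| ≤ r * t :=
  (h_bdd _).trans ((min_le_left _ _).trans_eq (abs_mul_zero_sub hr ht))

lemma sq_le_min_sq {r : ℝ} (hr : 0 ≤ r) : h r ^ 2 ≤ min r (r ^ 2) := by
  have hH := abs_le_min_one_of_abs_le h_bdd (abs_of_nonneg hr).le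
  simpa [abs_mul, ← sq] using abs_mul_le_min_sq hH hH

lemma abs_gammaIntegrand_le {a y y' r : ℝ} (hr : 0 ≤ r) (ha : 0 < a)
    (hy : 0 ≤ y) (hyy' : y ≤ y') (hy'a : y' ≤ a) :
    |gammaIntegrand h a y y' r| ≤ (y + y') * min r (r ^ 2) := by
  have ht := div_mem_Icc ha hy (hyy'.trans hy'a)
  have ht' := div_mem_Icc ha (hy.trans hyy') hy'a
  have hP := abs_le_min_one_of_abs_le h_bdd (abs_mul_one_sub_le hr ht)
  have hQ := abs_le_min_one_of_abs_le h_bdd (abs_mul_one_sub_le hr ht')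
  have hP₀ := abs_mul_zero_sub_le h_bdd hr ht.1
  have hP₀' := abs_le_min_one_of_abs_le h_bdd
    ((abs_mul_zero_sub hr ht.1).trans_le (mul_le_of_le_one_right hr ht.2))
  have hQ₀ := abs_le_min_one_of_abs_le h_bdd
    ((abs_mul_zero_sub hr ht'.1).trans_le (mul_le_of_le_one_right hr ht'.2))
  have hPQ := abs_mul_le_min_sq hP hQ
  have hP₀Q := abs_mul_le_min_sq hP₀' hQ
  have hP₀Q₀ := abs_mul_le_mul_min_sq hP₀ hQ₀
  calc |gammaIntegrand h a y y' r|
      ≤ y * min r (r ^ 2) + (y' - y) * min r (r ^ 2) + (a - y') * (y / a * min r (r ^ 2)) := by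
        refine (abs_mul_add_mul_add_mul_le hy (by linarith) (by linarith)).trans ?_
        gcongr
    _ ≤ (y + y') * min r (r ^ 2) := by
        nlinarith [sub_mul_div_le ha hy (hy.trans hyy'), le_min hr (sq_nonneg r)]

lemma abs_mul_sub_sq_le (h_lip : LipschitzWith 1 h) {r t t' c : ℝ} (hr : 0 ≤ r)
    (ht : 0 ≤ t) (htc : t ≤ c) (ht' : t' ∈ Icc 0 1) (htc' : t' ≤ c) :
    |h (r * (1 - t)) * h (r * (1 - t')) - h r ^ 2| ≤ 2 * c * min r (r ^ 2) := by
  have hdiff {s : ℝ} (hs : 0 ≤ s) (hsc : s ≤ c) : |h (r * (1 - s)) - h r| ≤ r * c := by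
    have := h_lip.dist_le_mul (r * (1 - s)) r
    rw [NNReal.coe_one, one_mul, Real.dist_eq, Real.dist_eq,
      show r * (1 - s) - r = r * (0 - s) by ring, abs_mul_zero_sub hr hs] at this
    exact this.trans (mul_le_mul_of_nonneg_left hsc hr)
  have hH := abs_le_min_one_of_abs_le h_bdd (abs_of_nonneg hr).le
  have hQ := abs_le_min_one_of_abs_le h_bdd (abs_mul_one_sub_le hr ht')
  rw [show h (r * (1 - t)) * h (r * (1 - t')) - h r ^ 2
      = (h (r * (1 - t)) - h r) * h (r * (1 - t')) + (h (r * (1 - t')) - h r) * h r by ring]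
  calc _ ≤ c * min r (r ^ 2) + c * min r (r ^ 2) := (abs_add_le _ _).trans (add_le_add
        (abs_mul_le_mul_min_sq (hdiff ht htc) hQ) (abs_mul_le_mul_min_sq (hdiff ht'.1 htc') hH))
    _ = 2 * c * min r (r ^ 2) := by ring

lemma sub_mul_abs_mul_le {a y y' r M R : ℝ} (hr : 0 ≤ r) (ha : 0 < a) (hMa : M ≤ a)
    (hR : 0 ≤ R) (hy : 0 ≤ y) (hyy' : y ≤ y') (hy'M : y' ≤ M) :
    (a - y') * |h (r * (0 - y / a)) * h (r * (0 - y' / a))|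
      ≤ M * ((R + 1) * (M / a) * min r (r ^ 2) + tailCutoff R r * min r (r ^ 2)) := by
  have hM : 0 ≤ M := hy.trans (hyy'.trans hy'M)
  have hP₀ := abs_mul_zero_sub_le h_bdd hr (div_nonneg hy ha.le)
  have hQ₀ := abs_le_min_one_of_abs_le h_bdd
    ((abs_mul_zero_sub hr (div_nonneg (hy.trans hyy') ha.le)).trans_le
      (mul_le_mul_of_nonneg_left (div_le_div_of_nonneg_right hy'M ha.le) hr))
  have hcoef : (a - y') * (r * (y / a)) ≤ M * r := by
    rw [mul_left_comm, mul_comm M]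
    exact mul_le_mul_of_nonneg_left
      ((sub_mul_div_le ha hy (hy.trans hyy')).trans (hyy'.trans hy'M)) hr
  calc (a - y') * |h (r * (0 - y / a)) * h (r * (0 - y' / a))|
      ≤ (a - y') * (r * (y / a)) * min (r * (M / a)) 1 := by
        rw [abs_mul, mul_assoc]
        gcongr
        linarith
    _ ≤ M * r * min (r * (M / a)) 1 := by gcongr
    _ ≤ _ := by
        rw [mul_assoc]; gcongr; exact mul_min_le_tailCutoff hr (div_nonneg hM ha.le) hR

lemma abs_gammaIntegrand_sub_le (h_lip : LipschitzWith 1 h) {a y y' r M R : ℝ} (hr : 0 ≤ r)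
    (ha : 0 < a) (hMa : M ≤ a) (hR : 0 ≤ R) (hy : 0 ≤ y) (hyy' : y ≤ y') (hy'M : y' ≤ M) :
    |gammaIntegrand h a y y' r - y * h r ^ 2|
      ≤ M * ((R + 4) * (M / a) * min r (r ^ 2) + tailCutoff R r * min r (r ^ 2)) := by
  have htc : y / a ≤ M / a := div_le_div_of_nonneg_right (hyy'.trans hy'M) ha.le
  have htc' : y' / a ≤ M / a := div_le_div_of_nonneg_right hy'M ha.le
  have ht' := div_mem_Icc ha (hy.trans hyy') (hy'M.trans hMa)
  have hX := abs_mul_sub_sq_le h_bdd h_lip hr (div_nonneg hy ha.le) htc ht' htc'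
  have hY := abs_mul_le_mul_min_sq
    ((abs_mul_zero_sub_le h_bdd hr (div_nonneg hy ha.le)).trans (mul_le_mul_of_nonneg_left htc hr))
    (abs_le_min_one_of_abs_le h_bdd (abs_mul_one_sub_le hr ht'))
  have hZ := sub_mul_abs_mul_le h_bdd hr ha hMa hR hy hyy' hy'M
  calc |gammaIntegrand h a y y' r - y * h r ^ 2|
      = |y * (h (r * (1 - y / a)) * h (r * (1 - y' / a)) - h r ^ 2)
          + (y' - y) * (h (r * (0 - y / a)) * h (r * (1 - y' / a)))
          + (a - y') * (h (r * (0 - y / a)) * h (r * (0 - y' / a)))| := by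
        simp only [gammaIntegrand]; ring_nf
    _ ≤ M * (2 * (M / a) * min r (r ^ 2)) + M * (M / a * min r (r ^ 2))
          + M * ((R + 1) * (M / a) * min r (r ^ 2) + tailCutoff R r * min r (r ^ 2)) := by
        refine (abs_mul_add_mul_add_mul_le hy (by linarith) (by linarith)).trans ?_
        gcongr <;> linarith
    _ = _ := by ring

variable {ν : Measure ℝ} (hν : ∀ᵐ r ∂ν, 0 ≤ r) (hκ : Integrable (fun r => min r (r ^ 2)) ν)
include hν hκ

lemma abs_gammaChar_le {a y y' : ℝ} (ha : 0 < a) (hy : 0 ≤ y) (hyy' : y ≤ y') (hy'a : y' ≤ a) :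
    |gammaChar h ν a y y'| ≤ (y + y') * ∫ r, min r (r ^ 2) ∂ν := by
  rw [gammaChar_eq_integral_gammaIntegrand h ν hy hyy' hy'a, ← integral_const_mul,
    ← Real.norm_eq_abs]
  exact norm_integral_le_of_norm_le (hκ.const_mul _)
    (hν.mono fun r hr => abs_gammaIntegrand_le h_bdd hr ha hy hyy' hy'a)

lemma abs_gammaChar_sub_le (h_lip : LipschitzWith 1 h) {a y y' M R : ℝ} (ha : 0 < a)
    (hMa : M ≤ a) (hR : 0 ≤ R) (hy : 0 ≤ y) (hyy' : y ≤ y') (hy'M : y' ≤ M) :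
    |gammaChar h ν a y y' - y * ∫ r, h r ^ 2 ∂ν|
      ≤ M * ((R + 4) * (M / a) * ∫ r, min r (r ^ 2) ∂ν
        + ∫ r, tailCutoff R r * min r (r ^ 2) ∂ν) := by
  have hh := h_lip.continuous
  have hy'a : y' ≤ a := hy'M.trans hMa
  have hF : Integrable (gammaIntegrand h a y y') ν :=
    (hκ.const_mul (y + y')).mono' (continuous_gammaIntegrand hh a y y').aestronglyMeasurable
      (hν.mono fun r hr => abs_gammaIntegrand_le h_bdd hr ha hy hyy' hy'a)
  have hH : Integrable (fun r => h r ^ 2) ν :=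
    hκ.mono' (hh.pow 2).aestronglyMeasurable (hν.mono fun r hr => by
      rw [Real.norm_eq_abs, abs_of_nonneg (sq_nonneg _)]; exact sq_le_min_sq h_bdd hr)
  have hχ : Integrable (fun r => tailCutoff R r * min r (r ^ 2)) ν :=
    hκ.mono' ((continuous_tailCutoff R).aestronglyMeasurable.mul hκ.1) (hν.mono fun r hr =>
      (abs_tailCutoff_mul_le R r _).trans_eq (abs_of_nonneg (le_min hr (sq_nonneg r))))
  rw [gammaChar_eq_integral_gammaIntegrand h ν hy hyy' hy'a, ← integral_const_mul,
    ← integral_sub hF (hH.const_mul y), ← integral_const_mul, ← integral_add (hκ.const_mul _) hχ,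
    ← integral_const_mul, ← Real.norm_eq_abs]
  exact norm_integral_le_of_norm_le (((hκ.const_mul _).add hχ).const_mul M)
    (hν.mono fun r hr => abs_gammaIntegrand_sub_le h_bdd h_lip hr ha hMa hR hy hyy' hy'M)

lemma iSup_abs_gammaChar_sub_le (h_lip : LipschitzWith 1 h) (I : ℝ) {a M R : ℝ} (ha : 0 < a)
    (hM : 0 ≤ M) (hMa : M ≤ a) (hR : 0 ≤ R) :
    ⨆ p ∈ {p : ℝ × ℝ | 0 ≤ p.1 ∧ p.1 ≤ p.2 ∧ p.2 ≤ M}, |gammaChar h ν a p.1 p.2 - p.1 * I|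
      ≤ M * ((R + 4) * (M / a) * ∫ r, min r (r ^ 2) ∂ν
        + ∫ r, tailCutoff R r * min r (r ^ 2) ∂ν) + M * |∫ r, h r ^ 2 ∂ν - I| := by
  set B := M * ((R + 4) * (M / a) * ∫ r, min r (r ^ 2) ∂ν
    + ∫ r, tailCutoff R r * min r (r ^ 2) ∂ν) + M * |∫ r, h r ^ 2 ∂ν - I| with hB_def
  have hp : ∀ p ∈ {p : ℝ × ℝ | 0 ≤ p.1 ∧ p.1 ≤ p.2 ∧ p.2 ≤ M},
      |gammaChar h ν a p.1 p.2 - p.1 * I| ≤ B := by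
    rintro ⟨y, y'⟩ ⟨hy, hyy', hy'M⟩
    calc |gammaChar h ν a y y' - y * I|
        ≤ |gammaChar h ν a y y' - y * ∫ r, h r ^ 2 ∂ν| + |y * (∫ r, h r ^ 2 ∂ν - I)| := by
          rw [mul_sub]; exact abs_sub_le _ _ _
      _ ≤ B := by
          rw [abs_mul, abs_of_nonneg hy, hB_def]
          gcongr
          · exact abs_gammaChar_sub_le h_bdd hν hκ h_lip ha hMa hR hy hyy' hy'M
          · exact hyy'.trans hy'M
  have hB := (abs_nonneg _).trans (hp (0, 0) ⟨le_rfl, le_rfl, hM⟩)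
  exact Real.iSup_le (fun p => Real.iSup_le (hp p) hB) hB

end Truncation

lemma integrable_min_sq {ν : Measure ℝ} (hν : ∀ᵐ r ∂ν, 0 ≤ r)
    (hmom : ∫⁻ r, ENNReal.ofReal (r ^ 2) ∂ν < ⊤) : Integrable (fun r => min r (r ^ 2)) ν := by
  have hsq : Integrable (fun r : ℝ => r ^ 2) ν :=
    ⟨(continuous_pow 2).aestronglyMeasurable,
      (hasFiniteIntegral_iff_ofReal (ae_of_all _ fun r => sq_nonneg r)).2 hmom⟩
  refine hsq.mono' (by fun_prop) (hν.mono fun r hr => ?_)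
  rw [Real.norm_eq_abs, abs_of_nonneg (le_min hr (sq_nonneg r))]
  exact min_le_right _ _

lemma integrableOn_min_sq_Ioi {π : Measure ℝ}
    (hmom : ∫⁻ r, ENNReal.ofReal (min r (r ^ 2)) ∂π < ⊤) :
    IntegrableOn (fun r => min r (r ^ 2)) (Ioi 0) π := by
  have hnonneg : 0 ≤ᵐ[π.restrict (Ioi 0)] fun r => min r (r ^ 2) :=
    (ae_restrict_mem measurableSet_Ioi).mono fun r hr => le_min (le_of_lt hr) (sq_nonneg r)
  exact ⟨by fun_prop, (hasFiniteIntegral_iff_ofReal hnonneg).2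
    ((setLIntegral_le_lintegral _ _).trans_lt hmom)⟩

lemma tendsto_integral_tailCutoff_mul {μ : Measure ℝ} {g : ℝ → ℝ} (hg : Integrable g μ) :
    Tendsto (fun R => ∫ r, tailCutoff R r * g r ∂μ) atTop (𝓝 0) := by
  have hlim (r : ℝ) : Tendsto (fun R => tailCutoff R r * g r) atTop (𝓝 0) :=
    tendsto_const_nhds.congr' <| (eventually_ge_atTop r).mono fun R hR => by
      simp only [tailCutoff_eq_zero hR, zero_mul]
  simpa using tendsto_integral_filter_of_dominated_convergence (fun r => ‖g r‖)
    (Eventually.of_forall fun R => (continuous_tailCutoff R).aestronglyMeasurable.mul hg.1)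
    (Eventually.of_forall fun R => ae_of_all _ fun r => abs_tailCutoff_mul_le R r (g r))
    hg.norm (ae_of_all _ hlim)

/-- Assumption (H) only tests functions of the form `f(r) min(r, r²)` with `f` bounded; any
continuous `g` with `|g| ≤ min(r, r²)` is of that form with `f = g / min(r, r²)`. -/
lemma tendsto_setIntegral_of_abs_le_min_sq {ν : ℝ → Measure ℝ} {π : Measure ℝ}
    (hH : ∀ f : ℝ → ℝ, ContinuousOn f (Ioi 0) → (∃ C : ℝ, ∀ x ∈ Ioi (0 : ℝ), |f x| ≤ C) →
      Tendsto (fun a => ∫ r in Ioi (0 : ℝ), f r * min r (r ^ 2) ∂(ν a)) atTop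
        (𝓝 (∫ r in Ioi (0 : ℝ), f r * min r (r ^ 2) ∂π)))
    {g : ℝ → ℝ} (hg : ContinuousOn g (Ioi 0)) (hgκ : ∀ r ∈ Ioi (0 : ℝ), |g r| ≤ min r (r ^ 2)) :
    Tendsto (fun a => ∫ r in Ioi (0 : ℝ), g r ∂(ν a)) atTop (𝓝 (∫ r in Ioi (0 : ℝ), g r ∂π)) := by
  have hκ (r : ℝ) (hr : r ∈ Ioi (0 : ℝ)) : 0 < min r (r ^ 2) := lt_min hr (pow_pos hr 2)
  have hrw (μ : Measure ℝ) : ∫ r in Ioi (0 : ℝ), g r / min r (r ^ 2) * min r (r ^ 2) ∂μ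
      = ∫ r in Ioi (0 : ℝ), g r ∂μ :=
    setIntegral_congr_fun measurableSet_Ioi fun r hr => div_mul_cancel₀ _ (hκ r hr).ne'
  have := hH (fun r => g r / min r (r ^ 2))
    (hg.div (by fun_prop) fun r hr => (hκ r hr).ne')
    ⟨1, fun r hr => by rw [abs_div, abs_of_pos (hκ r hr), div_le_one (hκ r hr)]; exact hgκ r hr⟩
  simpa only [hrw] using this

lemma tendsto_zero_of_eventually_le_of_tendsto {α ι : Type*} {l : Filter α} {l' : Filter ι}
    [l'.NeBot] {s : α → ℝ} {B : ι → α → ℝ} {L : ι → ℝ} (hs : ∀ᶠ a in l, 0 ≤ s a)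
    (hB : ∀ᶠ i in l', ∀ᶠ a in l, s a ≤ B i a) (hBL : ∀ᶠ i in l', Tendsto (B i) l (𝓝 (L i)))
    (hL : Tendsto L l' (𝓝 0)) : Tendsto s l (𝓝 0) := by
  refine tendsto_order.2 ⟨fun ε hε => hs.mono fun a ha => hε.trans_le ha, fun ε hε => ?_⟩
  obtain ⟨i, hsB, hBi, hLi⟩ := (hB.and (hBL.and (hL.eventually (gt_mem_nhds hε)))).exists
  filter_upwards [hsB, hBi.eventually (gt_mem_nhds hLi)] with a h₁ h₂ using h₁.trans_lt h₂

theorem stmt13_general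
    (h : ℝ → ℝ)
    (h_lip : LipschitzWith 1 h)
    (h_bdd : ∀ x : ℝ, |h x| ≤ min |x| 1)
    (π : Measure ℝ)
    (hπmom : ∫⁻ r, ENNReal.ofReal (min r (r ^ 2)) ∂π < ⊤)
    (ν : ℝ → Measure ℝ)
    (hνsupp : ∀ a : ℝ, 0 < a → (ν a) (Set.Ioc 0 a)ᶜ = 0)
    (hνmom : ∀ a : ℝ, 0 < a → ∫⁻ r, ENNReal.ofReal (r ^ 2) ∂(ν a) < ⊤)
    (hH : ∀ f : ℝ → ℝ, ContinuousOn f (Set.Ioi 0) →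
      (∃ C : ℝ, ∀ x ∈ Set.Ioi (0 : ℝ), |f x| ≤ C) →
      Tendsto (fun a => ∫ r in Set.Ioi (0 : ℝ), f r * min r (r ^ 2) ∂(ν a))
        atTop
        (nhds (∫ r in Set.Ioi (0 : ℝ), f r * min r (r ^ 2) ∂π))) :
    (∀ a : ℝ, 0 < a → ∀ y y' : ℝ, 0 ≤ y → y ≤ y' → y' ≤ a →
      |gammaChar h (ν a) a y y'|
        ≤ (y + y') * ∫ r, min r (r ^ 2) ∂(ν a)) ∧
    (∀ M : ℝ, 0 < M →
      Tendsto
        (fun a : ℝ =>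
          ⨆ p ∈ {p : ℝ × ℝ | 0 ≤ p.1 ∧ p.1 ≤ p.2 ∧ p.2 ≤ M},
            |gammaChar h (ν a) a p.1 p.2
              - p.1 * ∫ r in Set.Ioi (0 : ℝ), (h r) ^ 2 ∂π|)
        atTop (nhds 0)) := by
  have hν (a : ℝ) (ha : 0 < a) : ∀ᵐ r ∂(ν a), r ∈ Ioi 0 :=
    (show ∀ᵐ r ∂(ν a), r ∈ Ioc 0 a from mem_ae_iff.2 (hνsupp a ha)).mono fun r hr => hr.1
  have hν₀ (a : ℝ) (ha : 0 < a) : ∀ᵐ r ∂(ν a), 0 ≤ r := (hν a ha).mono fun r hr => le_of_lt hr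
  have hκ (a : ℝ) (ha : 0 < a) := integrable_min_sq (hν₀ a ha) (hνmom a ha)
  refine ⟨fun a ha y y' => abs_gammaChar_le h_bdd (hν₀ a ha) (hκ a ha) ha, fun M hM => ?_⟩
  have hκ_le (r : ℝ) (hr : r ∈ Ioi (0 : ℝ)) : |min r (r ^ 2)| ≤ min r (r ^ 2) :=
    (abs_of_nonneg (le_min (le_of_lt hr) (sq_nonneg r))).le
  have hlim_κ := tendsto_setIntegral_of_abs_le_min_sq hH (by fun_prop) hκ_le
  have hlim_tail (R : ℝ) := tendsto_setIntegral_of_abs_le_min_sq hH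
    (g := fun r => tailCutoff R r * min r (r ^ 2)) (by fun_prop)
    fun r hr => (abs_tailCutoff_mul_le R r _).trans (hκ_le r hr)
  have hlim_h := tendsto_setIntegral_of_abs_le_min_sq hH (g := fun r => h r ^ 2)
    (h_lip.continuous.pow 2).continuousOn
    fun r hr => (abs_of_nonneg (sq_nonneg _)).trans_le (sq_le_min_sq h_bdd (le_of_lt hr))
  have hlim_c (R : ℝ) : Tendsto (fun a : ℝ => (R + 4) * (M / a)) atTop (𝓝 0) := by
    simpa using (tendsto_const_nhds.div_atTop tendsto_id).const_mul (R + 4)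
  refine tendsto_zero_of_eventually_le_of_tendsto
    (Eventually.of_forall fun a => Real.iSup_nonneg fun _ => Real.iSup_nonneg fun _ => abs_nonneg _)
    ((eventually_ge_atTop 0).mono fun R hR => ?_)
    (Eventually.of_forall fun R => ((((hlim_c R).mul hlim_κ).add (hlim_tail R)).const_mul M).add
      ((tendsto_sub_nhds_zero_iff.2 hlim_h).abs.const_mul M))
    (by simpa using
      (tendsto_integral_tailCutoff_mul (integrableOn_min_sq_Ioi hπmom)).const_mul M)
  filter_upwards [eventually_ge_atTop M, eventually_gt_atTop 0] with a hMa ha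
  rw [Measure.restrict_eq_self_of_ae_mem (hν a ha)]
  exact iSup_abs_gammaChar_sub_le h_bdd (hν₀ a ha) (hκ a ha) h_lip _ ha hM.le hMa hR

/-- With `h` a truncation function and `(ν^{(a)})` satisfying
Assumption (H): (i) `|γ_a(y,y')| ≤ (y+y') ∫ min(r,r²) ν^{(a)}(dr)` for
`0 ≤ y ≤ y' ≤ a`; (ii) `γ_a(y,y') → y ∫ h(r)² π(dr)` uniformly on
`0 ≤ y ≤ y' ≤ M` as `a → ∞`. -/
theorem stmt13
    (δ : ℝ) (hδ : 0 < δ) (h : ℝ → ℝ)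
    (h_mono : Monotone h) (h_lip : LipschitzWith 1 h)
    (h_bdd : ∀ x : ℝ, |h x| ≤ min |x| 1)
    (h_id : ∀ x : ℝ, |x| ≤ δ → h x = x)
    (π : Measure ℝ) (hπsupp : π (Set.Ioi 0)ᶜ = 0)
    (hπmom : ∫⁻ r, ENNReal.ofReal (min r (r ^ 2)) ∂π < ⊤)
    (ν : ℝ → Measure ℝ)
    (hνsupp : ∀ a : ℝ, 0 < a → (ν a) (Set.Ioc 0 a)ᶜ = 0)
    (hνmom : ∀ a : ℝ, 0 < a → ∫⁻ r, ENNReal.ofReal (r ^ 2) ∂(ν a) < ⊤)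
    (hH : ∀ f : ℝ → ℝ, ContinuousOn f (Set.Ioi 0) →
      (∃ C : ℝ, ∀ x ∈ Set.Ioi (0 : ℝ), |f x| ≤ C) →
      Tendsto (fun a => ∫ r in Set.Ioi (0 : ℝ), f r * min r (r ^ 2) ∂(ν a))
        atTop
        (nhds (∫ r in Set.Ioi (0 : ℝ), f r * min r (r ^ 2) ∂π))) :
    (∀ a : ℝ, 0 < a → ∀ y y' : ℝ, 0 ≤ y → y ≤ y' → y' ≤ a →
      |gammaChar h (ν a) a y y'|
        ≤ (y + y') * ∫ r, min r (r ^ 2) ∂(ν a)) ∧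
    (∀ M : ℝ, 0 < M →
      Tendsto
        (fun a : ℝ =>
          ⨆ p ∈ {p : ℝ × ℝ | 0 ≤ p.1 ∧ p.1 ≤ p.2 ∧ p.2 ≤ M},
            |gammaChar h (ν a) a p.1 p.2
              - p.1 * ∫ r in Set.Ioi (0 : ℝ), (h r) ^ 2 ∂π|)
        atTop (nhds 0)) :=
  stmt13_general h h_lip h_bdd π hπmom ν hνsupp hνmom hH
end

section
/- Let p ≥ 1 be an integer, α > 0, and g : ℝ^p → ℝ a bounded Lipschitz function with |g| ≤ 1 and g(z_1,…,z_p) = 0 whenever |z_i| ≤ α for all i. Let π be a Borel measure on (0,∞) with ∫ min(r, r²) π(dr) < ∞, and (ν^{(a)})_{a>0} measures on (0,∞) supported on (0,a] with ∫ r² ν^{(a)}(dr) < ∞ satisfying Assumption (H). For (y_1,…,y_p) with 0 ≤ y_1 ≤ ⋯ ≤ y_p ≤ a define φ_a(y_1,…,y_p) = ∫ ν^{(a)}(dr) ∫_0^a du · g(r(1_{u ≤ y_1} − y_1/a), …, r(1_{u ≤ y_p} − y_p/a)). Then: (i) |φ_a(y_1,…,y_p)| ≤ (2/α) y_p ∫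 ν^{(a)}(dr) r 1_{r > α}; and (ii) for every M > 0, sup over {0 ≤ y_1 ≤ ⋯ ≤ y_p ≤ M} of | φ_a(y_1,…,y_p) − ∫ π(dr) ∫_0^∞ du · g(r 1_{u ≤ y_1}, …, r 1_{u ≤ y_p}) | → 0 as a → ∞. -/
open MeasureTheory Filter

/-- The integral of the test function `g` against the jump kernel of the
rescaled generalized Fleming-Viot process associated with the measure `ν` on
`(0,a]`:
`φ_a(y) = ∫ ν(dr) ∫_0^a du g(r(1_{u≤y₁} - y₁/a), …, r(1_{u≤y_p} - y_p/a))`. -/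
noncomputable def phiChar {p : ℕ} (g : (Fin p → ℝ) → ℝ) (ν : Measure ℝ)
    (a : ℝ) (y : Fin p → ℝ) : ℝ :=
  ∫ r, (∫ u in Set.Ioc (0 : ℝ) a,
      g (fun i => r * ((if u ≤ y i then (1 : ℝ) else 0) - y i / a))) ∂ν

/-!
Fix `r > 0` and split the `u`-integral of `φ_a` at `y_p`. On `(0, y_p]` the integrand differs
from the flow integrand `g(r 1_{u ≤ y})` by at most `K r y_p / a` (Lipschitz), and it vanishes
when `r ≤ α`; on `(y_p, a]` it is the constant `g(-r y / a)`, which vanishes unless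
`r y_p > α a`. This gives (i) directly, and for (ii) bounds the error by
`K M² a⁻¹ ∫_{r>α} r ν^{(a)}(dr) + (M/α) ∫_{r>αa/M} r ν^{(a)}(dr)`. Assumption (H), applied to
continuous cut-offs of `r ↦ r / min(r, r²)`, keeps the first tail bounded and sends the second
to `0`. For monotone `y` the flow integrand is a step function of `u`, equal to `g(r 1_{i ≥ k})`
on `(y_{k-1}, y_k]`, so the remaining difference is a combination, with weights in `[0, M]`, of
the `n + 1` differences `∫ g(r 1_{i ≥ k}) (ν^{(a)} - π)(dr)`, each tending to `0` by (H)
since `g` vanishes near `0`.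
-/

open Set

lemma abs_le_mul_min_sq_of_eq_zero {c r x C : ℝ} (hc : 0 < c) (hr : 0 < r) (hx : |x| ≤ C)
    (hz : r ≤ c → x = 0) : |x| ≤ C / min c (c ^ 2) * min r (r ^ 2) := by
  have hC : 0 ≤ C := (abs_nonneg x).trans hx
  rcases le_or_gt r c with hrc | hcr
  · rw [hz hrc, abs_zero]
    positivity
  · calc |x| ≤ C / min c (c ^ 2) * min c (c ^ 2) := by
          rwa [div_mul_cancel₀ _ (by positivity)]
      _ ≤ C / min c (c ^ 2) * min r (r ^ 2) := by
          gcongr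

lemma le_max_inv_mul_min_sq {c r : ℝ} (hc : 0 < c) (hcr : c ≤ r) :
    r ≤ max 1 c⁻¹ * min r (r ^ 2) := by
  have hr : 0 < r := hc.trans_le hcr
  rcases le_total r 1 with hr1 | hr1
  · rw [min_eq_right (by nlinarith)]
    calc r = r⁻¹ * r ^ 2 := by field_simp
      _ ≤ max 1 c⁻¹ * r ^ 2 := by gcongr; exact le_max_of_le_right (inv_anti₀ hc hcr)
  · rw [min_eq_left (by nlinarith)]
    exact le_mul_of_one_le_left hr.le (le_max_left _ _)

lemma integrable_min_sq_of_lintegral {μ : Measure ℝ} (hpos : ∀ᵐ r ∂μ, 0 < r)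
    (h : ∫⁻ r, ENNReal.ofReal (min r (r ^ 2)) ∂μ < ⊤) :
    Integrable (fun r => min r (r ^ 2)) μ :=
  ⟨by fun_prop, (hasFiniteIntegral_iff_ofReal (by filter_upwards [hpos] with r hr; positivity)).2 h⟩

lemma integrable_min_sq_of_lintegral_sq {μ : Measure ℝ} (hpos : ∀ᵐ r ∂μ, 0 < r)
    (h : ∫⁻ r, ENNReal.ofReal (r ^ 2) ∂μ < ⊤) : Integrable (fun r => min r (r ^ 2)) μ := by
  have hsq : Integrable (fun r : ℝ => r ^ 2) μ :=
    ⟨by fun_prop, (hasFiniteIntegral_iff_ofReal (ae_of_all _ fun r => sq_nonneg r)).2 h⟩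
  refine hsq.mono' (by fun_prop) ?_
  filter_upwards [hpos] with r hr
  rw [Real.norm_eq_abs, abs_of_pos (by positivity)]
  exact min_le_right _ _

lemma integrable_of_abs_le_mul_min_sq {μ : Measure ℝ} (hμ : Integrable (fun r => min r (r ^ 2)) μ)
    (hpos : ∀ᵐ r ∂μ, 0 < r) {h : ℝ → ℝ} (hm : AEStronglyMeasurable h μ) {C : ℝ}
    (hC : ∀ r, 0 < r → |h r| ≤ C * min r (r ^ 2)) : Integrable h μ :=
  (hμ.const_mul C).mono' hm (by filter_upwards [hpos] with r hr using hC r hr)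

lemma integrable_indicator_Ioi_id {μ : Measure ℝ} (hμ : Integrable (fun r => min r (r ^ 2)) μ)
    (hpos : ∀ᵐ r ∂μ, 0 < r) {c : ℝ} (hc : 0 < c) : Integrable ((Ioi c).indicator id) μ := by
  refine integrable_of_abs_le_mul_min_sq hμ hpos
    (C := max 1 c⁻¹) (measurable_id.indicator measurableSet_Ioi).aestronglyMeasurable
    fun r hr => ?_
  by_cases hcr : c < r
  · rw [indicator_of_mem (mem_Ioi.2 hcr), id, abs_of_pos hr]
    exact le_max_inv_mul_min_sq hc hcr.le
  · rw [indicator_of_notMem (notMem_Ioi.2 (not_lt.1 hcr)), abs_zero]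
    positivity

/-- Assumption (H): `min r r² • ν a` converges weakly to `min r r² • π` on `(0, ∞)`. -/
def MinSqWeakTendsto (ν : ℝ → Measure ℝ) (π : Measure ℝ) : Prop :=
  ∀ f : ℝ → ℝ, ContinuousOn f (Ioi 0) → (∃ C : ℝ, ∀ x ∈ Ioi (0 : ℝ), |f x| ≤ C) →
    Tendsto (fun a => ∫ r in Ioi (0 : ℝ), f r * min r (r ^ 2) ∂(ν a)) atTop
      (nhds (∫ r in Ioi (0 : ℝ), f r * min r (r ^ 2) ∂π))

lemma setIntegral_Ioi_div_min_sq_mul {μ : Measure ℝ} (hpos : ∀ᵐ r ∂μ, 0 < r) (h : ℝ → ℝ) :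
    ∫ r in Ioi 0, h r / min r (r ^ 2) * min r (r ^ 2) ∂μ = ∫ r, h r ∂μ := by
  rw [Measure.restrict_eq_self_of_ae_mem (s := Ioi 0) hpos]
  refine integral_congr_ae ?_
  filter_upwards [hpos] with r hr
  exact div_mul_cancel₀ _ (by positivity)

namespace MinSqWeakTendsto

variable {ν : ℝ → Measure ℝ} {π : Measure ℝ}

theorem tendsto_integral (hH : MinSqWeakTendsto ν π) (hπ : ∀ᵐ r ∂π, 0 < r)
    (hν : ∀ᶠ a in atTop, ∀ᵐ r ∂ν a, 0 < r) {h : ℝ → ℝ} (hc : ContinuousOn h (Ioi 0)) {C : ℝ}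
    (hC : ∀ r, 0 < r → |h r| ≤ C * min r (r ^ 2)) :
    Tendsto (fun a => ∫ r, h r ∂ν a) atTop (nhds (∫ r, h r ∂π)) := by
  have hq := hH (fun r => h r / min r (r ^ 2))
    (hc.div (by fun_prop) fun r (hr : 0 < r) => by positivity)
    ⟨C, fun r (hr : 0 < r) => by
      rw [abs_div, abs_of_pos (by positivity : 0 < min r (r ^ 2))]
      exact (div_le_iff₀ (by positivity)).2 (hC r hr)⟩
  rw [setIntegral_Ioi_div_min_sq_mul hπ] at hq
  refine hq.congr' ?_
  filter_upwards [hν] with a ha using setIntegral_Ioi_div_min_sq_mul ha h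

end MinSqWeakTendsto

noncomputable def ramp (c r : ℝ) : ℝ := min 1 (max 0 (2 * r / c - 1))

lemma ramp_nonneg (c r : ℝ) : 0 ≤ ramp c r := le_min zero_le_one (le_max_left _ _)

lemma ramp_le_one (c r : ℝ) : ramp c r ≤ 1 := min_le_left _ _

lemma ramp_eq_zero {c r : ℝ} (hc : 0 < c) (hr : r ≤ c / 2) : ramp c r = 0 := by
  have : 2 * r / c ≤ 1 := by rw [div_le_one hc]; linarith
  rw [ramp, max_eq_left (by linarith), min_eq_right zero_le_one]

lemma ramp_eq_one {c r : ℝ} (hc : 0 < c) (hr : c ≤ r) : ramp c r = 1 := by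
  have : 2 ≤ 2 * r / c := by rw [le_div_iff₀ hc]; linarith
  exact min_eq_left (le_max_of_le_right (by linarith))

lemma continuous_ramp (c : ℝ) : Continuous (ramp c) := by
  unfold ramp; fun_prop

lemma abs_ramp_mul_le {c r : ℝ} (hc : 0 < c) (hr : 0 < r) :
    |ramp c r * r| ≤ max 1 (c / 2)⁻¹ * min r (r ^ 2) := by
  rcases le_or_gt r (c / 2) with hrc | hcr
  · rw [ramp_eq_zero hc hrc, zero_mul, abs_zero]
    positivity
  · calc |ramp c r * r| ≤ r := by
          rw [abs_of_nonneg (mul_nonneg (ramp_nonneg c r) hr.le)]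
          exact mul_le_of_le_one_left hr.le (ramp_le_one c r)
      _ ≤ _ := le_max_inv_mul_min_sq (by positivity) hcr.le

lemma setIntegral_Ioi_id_le_integral_ramp_mul {μ : Measure ℝ}
    (hμ : Integrable (fun r => min r (r ^ 2)) μ) (hpos : ∀ᵐ r ∂μ, 0 < r) {c d : ℝ} (hc : 0 < c)
    (hcd : c ≤ d) : ∫ r in Ioi d, r ∂μ ≤ ∫ r, ramp c r * r ∂μ := by
  rw [← integral_indicator measurableSet_Ioi]
  refine integral_mono_of_nonneg ?_ ?_ ?_
  · filter_upwards [hpos] with r hr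
    exact indicator_nonneg (fun _ _ => hr.le) r
  · exact integrable_of_abs_le_mul_min_sq hμ hpos
      ((continuous_ramp c).mul continuous_id).aestronglyMeasurable fun r hr => abs_ramp_mul_le hc hr
  · filter_upwards [hpos] with r hr
    by_cases hdr : d < r
    · rw [indicator_of_mem (mem_Ioi.2 hdr), ramp_eq_one hc (hcd.trans hdr.le), one_mul]
    · rw [indicator_of_notMem (notMem_Ioi.2 (not_lt.1 hdr))]
      exact mul_nonneg (ramp_nonneg c r) hr.le

lemma tendsto_integral_ramp_mul_atTop {π : Measure ℝ}
    (hπ : Integrable (fun r => min r (r ^ 2)) π) (hpos : ∀ᵐ r ∂π, 0 < r) :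
    Tendsto (fun c => ∫ r, ramp c r * r ∂π) atTop (nhds 0) := by
  have h := tendsto_integral_filter_of_dominated_convergence (l := atTop)
    (F := fun c r => ramp c r * r) (f := fun _ => 0) (fun r => min r (r ^ 2))
    (Eventually.of_forall fun c => ((continuous_ramp c).mul continuous_id).aestronglyMeasurable)
    ?_ hπ ?_
  · simpa using h
  · filter_upwards [eventually_ge_atTop 2] with c hc
    filter_upwards [hpos] with r hr
    have hc2 : (c / 2)⁻¹ ≤ 1 := inv_le_one_of_one_le₀ (by linarith)
    calc ‖ramp c r * r‖ ≤ max 1 (c / 2)⁻¹ * min r (r ^ 2) := abs_ramp_mul_le (by linarith) hr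
      _ = min r (r ^ 2) := by rw [max_eq_left hc2, one_mul]
  · filter_upwards [hpos] with r hr
    refine tendsto_const_nhds.congr' ?_
    filter_upwards [eventually_ge_atTop (2 * r)] with c hc
    rw [ramp_eq_zero (by linarith) (by linarith), zero_mul]

namespace MinSqWeakTendsto

variable {ν : ℝ → Measure ℝ} {π : Measure ℝ}

theorem tendsto_integral_ramp_mul (hH : MinSqWeakTendsto ν π) (hπ : ∀ᵐ r ∂π, 0 < r)
    (hν : ∀ᶠ a in atTop, ∀ᵐ r ∂ν a, 0 < r) {c : ℝ} (hc : 0 < c) :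
    Tendsto (fun a => ∫ r, ramp c r * r ∂ν a) atTop (nhds (∫ r, ramp c r * r ∂π)) :=
  hH.tendsto_integral hπ hν ((continuous_ramp c).mul continuous_id).continuousOn
    fun _ hr => abs_ramp_mul_le hc hr

theorem tendsto_setIntegral_Ioi_mul_id (hH : MinSqWeakTendsto ν π)
    (hπ : Integrable (fun r => min r (r ^ 2)) π) (hπpos : ∀ᵐ r ∂π, 0 < r)
    (hν : ∀ᶠ a in atTop, Integrable (fun r => min r (r ^ 2)) (ν a))
    (hνpos : ∀ᶠ a in atTop, ∀ᵐ r ∂ν a, 0 < r) {κ : ℝ} (hκ : 0 < κ) :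
    Tendsto (fun a => ∫ r in Ioi (κ * a), r ∂ν a) atTop (nhds 0) := by
  refine tendsto_order.2 ⟨fun b hb => ?_, fun ε hε => ?_⟩
  · filter_upwards [eventually_ge_atTop 0] with a ha
    exact hb.trans_le (setIntegral_nonneg measurableSet_Ioi fun r (hr : κ * a < r) =>
      (mul_nonneg hκ.le ha).trans hr.le)
  · obtain ⟨c, hcε, hc⟩ := (((tendsto_integral_ramp_mul_atTop hπ hπpos).eventually_lt_const hε).and
      (eventually_gt_atTop 0)).exists
    filter_upwards [(hH.tendsto_integral_ramp_mul hπpos hνpos hc).eventually_lt_const hcε, hν,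
      hνpos, eventually_ge_atTop (c / κ)] with a haε ha hapos hca
    refine (setIntegral_Ioi_id_le_integral_ramp_mul ha hapos hc ?_).trans_lt haε
    rwa [div_le_iff₀' hκ] at hca

theorem tendsto_inv_mul_setIntegral_Ioi_id (hH : MinSqWeakTendsto ν π) (hπpos : ∀ᵐ r ∂π, 0 < r)
    (hν : ∀ᶠ a in atTop, Integrable (fun r => min r (r ^ 2)) (ν a))
    (hνpos : ∀ᶠ a in atTop, ∀ᵐ r ∂ν a, 0 < r) {c : ℝ} (hc : 0 < c) :
    Tendsto (fun a => a⁻¹ * ∫ r in Ioi c, r ∂ν a) atTop (nhds 0) := by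
  refine tendsto_inv_atTop_zero.zero_mul_isBoundedUnder_le
    ((hH.tendsto_integral_ramp_mul hπpos hνpos hc).isBoundedUnder_le.mono_le ?_)
  filter_upwards [hν, hνpos] with a ha hapos
  rw [Function.comp_apply, Real.norm_eq_abs, abs_of_nonneg (setIntegral_nonneg measurableSet_Ioi
    fun r (hr : c < r) => hc.le.trans hr.le)]
  exact setIntegral_Ioi_id_le_integral_ramp_mul ha hapos hc le_rfl

end MinSqWeakTendsto

section Kernel

variable {p : ℕ} {g : (Fin p → ℝ) → ℝ} {y : Fin p → ℝ} {α a r u M Y : ℝ}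

/-- `fvJump r a y u` is the argument of `g` in `phiChar`; for `u` beyond every `y i` it is
`fvDrift r a y`, and as `a → ∞` it becomes `csbpJump r y u`, the argument of `g` in the jump
kernel of the flow of CSBPs. -/
noncomputable def fvJump (r a : ℝ) (y : Fin p → ℝ) (u : ℝ) : Fin p → ℝ :=
  fun i => r * ((if u ≤ y i then (1 : ℝ) else 0) - y i / a)

noncomputable def fvDrift (r a : ℝ) (y : Fin p → ℝ) : Fin p → ℝ := fun i => -(r * (y i / a))

noncomputable def csbpJump (r : ℝ) (y : Fin p → ℝ) (u : ℝ) : Fin p → ℝ :=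
  fun i => r * (if u ≤ y i then (1 : ℝ) else 0)

noncomputable def fvInner (g : (Fin p → ℝ) → ℝ) (a : ℝ) (y : Fin p → ℝ) (r : ℝ) : ℝ :=
  ∫ u in Ioc 0 a, g (fvJump r a y u)

noncomputable def csbpInner (g : (Fin p → ℝ) → ℝ) (y : Fin p → ℝ) (r : ℝ) : ℝ :=
  ∫ u in Ioi 0, g (csbpJump r y u)

noncomputable def csbpChar (g : (Fin p → ℝ) → ℝ) (π : Measure ℝ) (y : Fin p → ℝ) : ℝ :=
  ∫ r, csbpInner g y r ∂π

lemma measurable_fvJump_uncurry (a : ℝ) (y : Fin p → ℝ) :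
    Measurable fun q : ℝ × ℝ => fvJump q.1 a y q.2 :=
  measurable_pi_lambda _ fun _ => measurable_fst.mul
    ((Measurable.ite (measurableSet_le measurable_snd measurable_const) measurable_const
      measurable_const).sub measurable_const)

lemma measurable_fvJump (r a : ℝ) (y : Fin p → ℝ) : Measurable (fvJump r a y) :=
  (measurable_fvJump_uncurry a y).comp measurable_prodMk_left

lemma measurable_csbpJump (r : ℝ) (y : Fin p → ℝ) : Measurable (csbpJump r y) :=
  measurable_pi_lambda _ fun _ => measurable_const.mul
    (Measurable.ite measurableSet_Iic measurable_const measurable_const)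

lemma integrableOn_Ioc_comp (hg : Continuous g) (hb : ∀ z, |g z| ≤ 1) {f : ℝ → Fin p → ℝ}
    (hf : Measurable f) (s t : ℝ) : IntegrableOn (fun u => g (f u)) (Ioc s t) :=
  Measure.integrableOn_of_bounded measure_Ioc_lt_top.ne
    (hg.measurable.comp hf).aestronglyMeasurable (ae_of_all _ fun u => hb (f u))

lemma abs_fvJump_le (hr : 0 ≤ r) (hy : ∀ i, 0 ≤ y i ∧ y i ≤ a) (i : Fin p) :
    |fvJump r a y u i| ≤ r := by
  have h0 : 0 ≤ y i / a := div_nonneg (hy i).1 ((hy i).1.trans (hy i).2)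
  have h1 : y i / a ≤ 1 := div_le_one_of_le₀ (hy i).2 ((hy i).1.trans (hy i).2)
  rw [fvJump, abs_mul, abs_of_nonneg hr]
  refine mul_le_of_le_one_right hr (abs_le.2 ⟨?_, ?_⟩) <;> split_ifs <;> linarith

lemma abs_csbpJump_le (hr : 0 ≤ r) (i : Fin p) : |csbpJump r y u i| ≤ r := by
  rw [csbpJump, abs_mul, abs_of_nonneg hr]
  refine mul_le_of_le_one_right hr ?_
  split_ifs <;> simp

lemma dist_fvJump_csbpJump_le (hr : 0 ≤ r) (ha : 0 < a) (hM : 0 ≤ M)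
    (hy : ∀ i, 0 ≤ y i ∧ y i ≤ M) : dist (fvJump r a y u) (csbpJump r y u) ≤ r * M / a := by
  refine (dist_pi_le_iff (by positivity)).2 fun i => ?_
  rw [Real.dist_eq, fvJump, csbpJump, mul_sub, sub_sub_cancel_left, abs_neg, abs_mul,
    abs_of_nonneg hr, abs_of_nonneg (div_nonneg (hy i).1 ha.le), mul_div_assoc]
  gcongr
  exact (hy i).2

lemma fvJump_eq_fvDrift (hu : ∀ i, y i < u) : fvJump r a y u = fvDrift r a y := by
  funext i
  simp [fvJump, fvDrift, not_le.2 (hu i)]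

lemma csbpJump_eq_zero (hu : ∀ i, y i < u) : csbpJump r y u = 0 := by
  funext i
  simp [csbpJump, not_le.2 (hu i)]

variable (hz : ∀ z : Fin p → ℝ, (∀ i, |z i| ≤ α) → g z = 0)
include hz

lemma g_fvDrift_eq_zero (hr : 0 ≤ r) (ha : 0 < a) (hy : ∀ i, 0 ≤ y i ∧ y i ≤ Y)
    (hrY : r * Y ≤ α * a) : g (fvDrift r a y) = 0 := by
  refine hz _ fun i => ?_
  rw [fvDrift, abs_neg, abs_of_nonneg (by have := (hy i).1; positivity), ← mul_div_assoc,
    div_le_iff₀ ha]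
  exact (mul_le_mul_of_nonneg_left (hy i).2 hr).trans hrY

lemma fvInner_eq_zero (hr : 0 ≤ r) (hrα : r ≤ α) (hy : ∀ i, 0 ≤ y i ∧ y i ≤ a) :
    fvInner g a y r = 0 :=
  setIntegral_eq_zero_of_forall_eq_zero fun _ _ =>
    hz _ fun i => (abs_fvJump_le hr hy i).trans hrα

omit hz in
lemma fvInner_eq_add (hg : Continuous g) (hb : ∀ z, |g z| ≤ 1) (hY : 0 ≤ Y) (hYa : Y ≤ a)
    (hyY : ∀ i, y i ≤ Y) :
    fvInner g a y r = (∫ u in Ioc 0 Y, g (fvJump r a y u)) + (a - Y) * g (fvDrift r a y) := by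
  have hf := measurable_fvJump r a y
  rw [fvInner, ← Ioc_union_Ioc_eq_Ioc hY hYa, setIntegral_union (Ioc_disjoint_Ioc_of_le le_rfl)
    measurableSet_Ioc (integrableOn_Ioc_comp hg hb hf _ _) (integrableOn_Ioc_comp hg hb hf _ _),
    setIntegral_congr_fun (s := Ioc Y a) measurableSet_Ioc fun u hu => by
      rw [fvJump_eq_fvDrift fun i => (hyY i).trans_lt hu.1],
    setIntegral_const, Real.volume_real_Ioc_of_le hYa, smul_eq_mul]

omit hz in
lemma csbpInner_eq_setIntegral_Ioc (h0 : g 0 = 0) (hyY : ∀ i, y i ≤ Y) :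
    csbpInner g y r = ∫ u in Ioc 0 Y, g (csbpJump r y u) := by
  refine setIntegral_eq_of_subset_of_forall_sdiff_eq_zero measurableSet_Ioi Ioc_subset_Ioi_self
    fun u hu => ?_
  have hYu : Y < u := by
    by_contra h
    exact hu.2 ⟨hu.1, not_lt.1 h⟩
  rw [csbpJump_eq_zero fun i => (hyY i).trans_lt hYu, h0]

lemma abs_fvInner_le (hg : Continuous g) (hb : ∀ z, |g z| ≤ 1) (hα : 0 < α) (ha : 0 < a)
    (hY : 0 ≤ Y) (hYa : Y ≤ a) (hy : ∀ i, 0 ≤ y i ∧ y i ≤ Y) (hr : 0 ≤ r) :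
    |fvInner g a y r| ≤ 2 / α * Y * (Ioi α).indicator id r := by
  rcases le_or_gt r α with hrα | hαr
  · rw [fvInner_eq_zero hz hr hrα fun i => ⟨(hy i).1, (hy i).2.trans hYa⟩, abs_zero,
      indicator_of_notMem (notMem_Ioi.2 hrα), mul_zero]
  rw [indicator_of_mem (mem_Ioi.2 hαr), id, fvInner_eq_add hg hb hY hYa fun i => (hy i).2]
  have h1 : |∫ u in Ioc 0 Y, g (fvJump r a y u)| ≤ Y := by
    have := norm_setIntegral_le_of_norm_le_const (f := fun u => g (fvJump r a y u)) (C := 1)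
      (measure_Ioc_lt_top (μ := volume) (a := 0) (b := Y)) fun u _ => hb (fvJump r a y u)
    rwa [Real.volume_real_Ioc_of_le hY, sub_zero, one_mul] at this
  have h2 : |(a - Y) * g (fvDrift r a y)| ≤ r * Y / α := by
    by_cases hrY : r * Y ≤ α * a
    · rw [g_fvDrift_eq_zero hz hr ha hy hrY, mul_zero, abs_zero]
      positivity
    · have hag : (a - Y) * |g (fvDrift r a y)| ≤ a := by
        nlinarith [mul_nonneg (sub_nonneg.2 hYa) (sub_nonneg.2 (hb (fvDrift r a y)))]
      rw [abs_mul, abs_of_nonneg (sub_nonneg.2 hYa), le_div_iff₀ hα]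
      nlinarith [mul_le_mul_of_nonneg_right hag hα.le]
  have h3 : Y ≤ r * Y / α := by
    rw [le_div_iff₀ hα]
    nlinarith
  calc _ ≤ _ := abs_add_le _ _
    _ ≤ Y + r * Y / α := add_le_add h1 h2
    _ ≤ 2 / α * Y * r := by
      rw [show 2 / α * Y * r = r * Y / α + r * Y / α by ring]
      linarith

lemma abs_setIntegral_fvJump_sub_csbpJump_le {K : NNReal} (hK : LipschitzWith K g)
    (hb : ∀ z, |g z| ≤ 1) (ha : 0 < a) (hM : 0 ≤ M) (hMa : M ≤ a)
    (hy : ∀ i, 0 ≤ y i ∧ y i ≤ M) (hr : 0 ≤ r) :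
    |(∫ u in Ioc 0 M, g (fvJump r a y u)) - ∫ u in Ioc 0 M, g (csbpJump r y u)|
      ≤ K * M ^ 2 / a * (Ioi α).indicator id r := by
  rw [← integral_sub
    (integrableOn_Ioc_comp hK.continuous hb (measurable_fvJump r a y) _ _)
    (integrableOn_Ioc_comp hK.continuous hb (measurable_csbpJump r y) _ _)]
  rcases le_or_gt r α with hrα | hαr
  · have hzero : ∀ u, g (fvJump r a y u) - g (csbpJump r y u) = 0 := fun u => by
      rw [hz _ fun i => (abs_fvJump_le hr (fun i => ⟨(hy i).1, (hy i).2.trans hMa⟩) i).trans hrα,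
        hz _ fun i => (abs_csbpJump_le hr i).trans hrα, sub_zero]
    rw [setIntegral_eq_zero_of_forall_eq_zero fun u _ => hzero u, abs_zero,
      indicator_of_notMem (notMem_Ioi.2 hrα), mul_zero]
  rw [indicator_of_mem (mem_Ioi.2 hαr), id]
  have := norm_setIntegral_le_of_norm_le_const
    (f := fun u => g (fvJump r a y u) - g (csbpJump r y u)) (C := K * (r * M / a))
    (measure_Ioc_lt_top (μ := volume) (a := 0) (b := M)) fun u _ => by
      rw [← dist_eq_norm]
      exact (hK.dist_le_mul _ _).trans
        (mul_le_mul_of_nonneg_left (dist_fvJump_csbpJump_le hr ha hM hy) K.2)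
  rw [Real.volume_real_Ioc_of_le hM, sub_zero] at this
  calc _ ≤ K * (r * M / a) * M := this
    _ = K * M ^ 2 / a * r := by ring

lemma abs_sub_mul_g_fvDrift_le (hb : ∀ z, |g z| ≤ 1) (hα : 0 < α) (hM : 0 < M) (hMa : M ≤ a)
    (hy : ∀ i, 0 ≤ y i ∧ y i ≤ M) (hr : 0 ≤ r) :
    |(a - M) * g (fvDrift r a y)| ≤ M / α * (Ioi (α / M * a)).indicator id r := by
  have ha := hM.trans_le hMa
  rcases le_or_gt r (α / M * a) with h | h
  · rw [indicator_of_notMem (notMem_Ioi.2 h), mul_zero]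
    rw [div_mul_eq_mul_div, le_div_iff₀ hM] at h
    rw [g_fvDrift_eq_zero hz hr ha hy (by linarith), mul_zero, abs_zero]
  rw [indicator_of_mem (mem_Ioi.2 h), id, abs_mul, abs_of_nonneg (sub_nonneg.2 hMa),
    div_mul_eq_mul_div, le_div_iff₀ hα]
  rw [div_mul_eq_mul_div, div_lt_iff₀ hM] at h
  have hag : (a - M) * |g (fvDrift r a y)| ≤ a := by
    nlinarith [mul_nonneg (sub_nonneg.2 hMa) (sub_nonneg.2 (hb (fvDrift r a y)))]
  nlinarith [mul_le_mul_of_nonneg_right hag hα.le]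

lemma abs_fvInner_sub_csbpInner_le {K : NNReal} (hK : LipschitzWith K g) (hb : ∀ z, |g z| ≤ 1)
    (hα : 0 < α) (hM : 0 < M) (hMa : M ≤ a) (hy : ∀ i, 0 ≤ y i ∧ y i ≤ M) (hr : 0 ≤ r) :
    |fvInner g a y r - csbpInner g y r|
      ≤ K * M ^ 2 / a * (Ioi α).indicator id r + M / α * (Ioi (α / M * a)).indicator id r := by
  rw [fvInner_eq_add hK.continuous hb hM.le hMa fun i => (hy i).2,
    csbpInner_eq_setIntegral_Ioc (hz 0 fun _ => by simpa using hα.le) fun i => (hy i).2,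
    add_sub_right_comm]
  exact (abs_add_le _ _).trans (add_le_add
    (abs_setIntegral_fvJump_sub_csbpJump_le hz hK hb (hM.trans_le hMa) hM.le hMa hy hr)
    (abs_sub_mul_g_fvDrift_le hz hb hα hM hMa hy hr))

omit hz in
lemma stronglyMeasurable_fvInner (hg : Continuous g) (a : ℝ) (y : Fin p → ℝ) :
    StronglyMeasurable (fvInner g a y) :=
  (hg.measurable.comp (measurable_fvJump_uncurry a y)).stronglyMeasurable.integral_prod_right'

lemma integrable_fvInner {μ : Measure ℝ} (hg : Continuous g) (hb : ∀ z, |g z| ≤ 1) (hα : 0 < α)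
    (hμ : Integrable (fun r => min r (r ^ 2)) μ) (hpos : ∀ᵐ r ∂μ, 0 < r) (ha : 0 < a)
    (hy : ∀ i, 0 ≤ y i ∧ y i ≤ a) : Integrable (fvInner g a y) μ :=
  ((integrable_indicator_Ioi_id hμ hpos hα).const_mul (2 / α * a)).mono'
    (stronglyMeasurable_fvInner hg a y).aestronglyMeasurable
    (by filter_upwards [hpos] with r hr using abs_fvInner_le hz hg hb hα ha ha.le le_rfl hy hr.le)

lemma abs_phiChar_le {μ : Measure ℝ} (hg : Continuous g) (hb : ∀ z, |g z| ≤ 1) (hα : 0 < α)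
    (hμ : Integrable (fun r => min r (r ^ 2)) μ) (hpos : ∀ᵐ r ∂μ, 0 < r) (ha : 0 < a)
    (hY : 0 ≤ Y) (hYa : Y ≤ a) (hy : ∀ i, 0 ≤ y i ∧ y i ≤ Y) :
    |phiChar g μ a y| ≤ 2 / α * Y * ∫ r in Ioi α, r ∂μ :=
  calc |phiChar g μ a y| ≤ ∫ r, 2 / α * Y * (Ioi α).indicator id r ∂μ :=
        norm_integral_le_of_norm_le (f := fvInner g a y)
          ((integrable_indicator_Ioi_id hμ hpos hα).const_mul _)
          (by filter_upwards [hpos] with r hr using abs_fvInner_le hz hg hb hα ha hY hYa hy hr.le)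
    _ = 2 / α * Y * ∫ r in Ioi α, r ∂μ := by
        rw [integral_const_mul, integral_indicator measurableSet_Ioi]
        rfl

end Kernel

section Levels

variable {n : ℕ} {y : Fin (n + 1) → ℝ} {k : ℕ} {r u M : ℝ}

/-- `levels y 0 = 0` and `levels y (k + 1) = y k` for `k ≤ n`; `Fin.clamp` only makes the
definition total. -/
def levels (y : Fin (n + 1) → ℝ) : ℕ → ℝ
  | 0 => 0
  | k + 1 => y (Fin.clamp k n)

lemma levels_succ (hk : k ≤ n) : levels y (k + 1) = y ⟨k, Nat.lt_succ_of_le hk⟩ := by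
  simp [levels, Fin.clamp, Nat.min_eq_left hk]

lemma levels_last : levels y (n + 1) = y (Fin.last n) := levels_succ le_rfl

lemma levels_nonneg (h0 : ∀ i, 0 ≤ y i) : ∀ k, 0 ≤ levels y k
  | 0 => le_rfl
  | _ + 1 => h0 _

lemma levels_le (hyM : ∀ i, y i ≤ M) (hM : 0 ≤ M) : ∀ k, levels y k ≤ M
  | 0 => hM
  | _ + 1 => hyM _

lemma levels_le_succ (hmono : Monotone y) (h0 : ∀ i, 0 ≤ y i) : ∀ k, levels y k ≤ levels y (k + 1)
  | 0 => h0 _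
  | k + 1 => hmono (Fin.le_iff_val_le_val.2 (min_le_min_right n k.le_succ))

lemma le_iff_of_mem_Ioc_levels (hmono : Monotone y) (hk : k ≤ n)
    (hu : u ∈ Ioc (levels y k) (levels y (k + 1))) (i : Fin (n + 1)) : u ≤ y i ↔ k ≤ i := by
  constructor
  · intro hui
    by_contra hik
    obtain ⟨m, rfl⟩ : ∃ m, k = m + 1 := ⟨k - 1, by omega⟩
    rw [levels_succ (by omega)] at hu
    exact not_le.2 hu.1 (hui.trans (hmono (Fin.le_iff_val_le_val.2 (by simp; omega))))
  · intro hki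
    rw [levels_succ hk] at hu
    exact hu.2.trans (hmono (Fin.le_iff_val_le_val.2 hki))

end Levels

section TopBlock

variable {p n : ℕ} {g : (Fin p → ℝ) → ℝ} {α r : ℝ}

noncomputable def topBlock (k : ℕ) (r : ℝ) : Fin p → ℝ := fun i => if k ≤ (i : ℕ) then r else 0

lemma continuous_topBlock (k : ℕ) : Continuous (topBlock (p := p) k) :=
  continuous_pi fun i => by unfold topBlock; split_ifs <;> fun_prop

lemma abs_topBlock_le {k : ℕ} (hr : 0 ≤ r) (i : Fin p) : |topBlock k r i| ≤ r := by
  unfold topBlock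
  split_ifs <;> simp [abs_of_nonneg hr, hr]

lemma abs_g_topBlock_le (hb : ∀ z, |g z| ≤ 1) (hz : ∀ z : Fin p → ℝ, (∀ i, |z i| ≤ α) → g z = 0)
    (hα : 0 < α) (k : ℕ) (hr : 0 < r) : |g (topBlock k r)| ≤ 1 / min α (α ^ 2) * min r (r ^ 2) :=
  abs_le_mul_min_sq_of_eq_zero hα hr (hb _) fun hrα =>
    hz _ fun i => (abs_topBlock_le hr.le i).trans hrα

lemma integrable_g_topBlock (hg : Continuous g) (hb : ∀ z, |g z| ≤ 1)
    (hz : ∀ z : Fin p → ℝ, (∀ i, |z i| ≤ α) → g z = 0) (hα : 0 < α) {μ : Measure ℝ}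
    (hμ : Integrable (fun r => min r (r ^ 2)) μ) (hpos : ∀ᵐ r ∂μ, 0 < r) (k : ℕ) :
    Integrable (fun r => g (topBlock k r)) μ :=
  integrable_of_abs_le_mul_min_sq hμ hpos
    (hg.comp (continuous_topBlock k)).aestronglyMeasurable fun _ hr =>
      abs_g_topBlock_le hb hz hα k hr

theorem MinSqWeakTendsto.tendsto_integral_g_topBlock {ν : ℝ → Measure ℝ} {π : Measure ℝ}
    (hH : MinSqWeakTendsto ν π) (hπ : ∀ᵐ r ∂π, 0 < r) (hν : ∀ᶠ a in atTop, ∀ᵐ r ∂ν a, 0 < r)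
    (hg : Continuous g) (hb : ∀ z, |g z| ≤ 1)
    (hz : ∀ z : Fin p → ℝ, (∀ i, |z i| ≤ α) → g z = 0) (hα : 0 < α) (k : ℕ) :
    Tendsto (fun a => ∫ r, g (topBlock k r) ∂ν a) atTop (nhds (∫ r, g (topBlock k r) ∂π)) :=
  hH.tendsto_integral hπ hν (hg.comp (continuous_topBlock k)).continuousOn fun _ hr =>
    abs_g_topBlock_le hb hz hα k hr

lemma csbpJump_eq_topBlock {y : Fin (n + 1) → ℝ} {k : ℕ} {u : ℝ} (hmono : Monotone y)
    (hk : k ≤ n) (hu : u ∈ Ioc (levels y k) (levels y (k + 1))) :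
    csbpJump r y u = topBlock k r := by
  funext i
  simp only [csbpJump, topBlock, le_iff_of_mem_Ioc_levels hmono hk hu i]
  split_ifs <;> simp

lemma setIntegral_csbpJump_eq_sum (g : (Fin (n + 1) → ℝ) → ℝ) {y : Fin (n + 1) → ℝ}
    (hmono : Monotone y) (h0 : ∀ i, 0 ≤ y i) (r : ℝ) :
    ∫ u in Ioc 0 (y (Fin.last n)), g (csbpJump r y u)
      = ∑ k ∈ Finset.range (n + 1), (levels y (k + 1) - levels y k) * g (topBlock k r) := by
  have hconst : ∀ k ∈ Finset.range (n + 1), ∀ u ∈ Ioc (levels y k) (levels y (k + 1)),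
      g (csbpJump r y u) = g (topBlock k r) := fun k hk u hu => by
    rw [csbpJump_eq_topBlock hmono (Nat.lt_succ_iff.1 (Finset.mem_range.1 hk)) hu]
  have h := intervalIntegral.sum_integral_adjacent_intervals (μ := volume)
    (f := fun u => g (csbpJump r y u)) (a := levels y) (n := n + 1) fun k hk => by
      rw [intervalIntegrable_iff_integrableOn_Ioc_of_le (levels_le_succ hmono h0 k)]
      exact (integrableOn_const (C := g (topBlock k r)) measure_Ioc_lt_top.ne).congr_fun
        (fun u hu => (hconst k (Finset.mem_range.2 hk) u hu).symm) measurableSet_Ioc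
  rw [show levels y 0 = 0 from rfl, levels_last, intervalIntegral.integral_of_le (h0 _)] at h
  rw [← h]
  refine Finset.sum_congr rfl fun k hk => ?_
  rw [intervalIntegral.integral_of_le (levels_le_succ hmono h0 k),
    setIntegral_congr_fun measurableSet_Ioc (hconst k hk), setIntegral_const,
    Real.volume_real_Ioc_of_le (levels_le_succ hmono h0 k), smul_eq_mul]

end TopBlock

section Estimates

variable {n : ℕ} {α a M : ℝ} {μ π : Measure ℝ}
variable {g : (Fin (n + 1) → ℝ) → ℝ} {y : Fin (n + 1) → ℝ}

lemma csbpInner_eq_sum (h0 : g 0 = 0) (hmono : Monotone y) (hy : ∀ i, 0 ≤ y i) :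
    csbpInner g y =
      fun r => ∑ k ∈ Finset.range (n + 1), (levels y (k + 1) - levels y k) * g (topBlock k r) := by
  funext r
  rw [csbpInner_eq_setIntegral_Ioc h0 fun i => hmono (Fin.le_last i),
    setIntegral_csbpJump_eq_sum g hmono hy]

lemma integrable_csbpInner (h0 : g 0 = 0) (hmono : Monotone y) (hy : ∀ i, 0 ≤ y i)
    (hG : ∀ k, Integrable (fun r => g (topBlock k r)) μ) : Integrable (csbpInner g y) μ := by
  rw [csbpInner_eq_sum h0 hmono hy]
  exact integrable_finsetSum _ fun k _ => (hG k).const_mul _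

lemma integral_csbpInner (h0 : g 0 = 0) (hmono : Monotone y) (hy : ∀ i, 0 ≤ y i)
    (hG : ∀ k, Integrable (fun r => g (topBlock k r)) μ) :
    ∫ r, csbpInner g y r ∂μ = ∑ k ∈ Finset.range (n + 1),
      (levels y (k + 1) - levels y k) * ∫ r, g (topBlock k r) ∂μ := by
  rw [csbpInner_eq_sum h0 hmono hy, integral_finsetSum _ fun k _ => (hG k).const_mul _]
  simp_rw [integral_const_mul]

lemma abs_integral_csbpInner_sub_le (h0 : g 0 = 0) (hmono : Monotone y) (hM : 0 ≤ M)
    (hy : ∀ i, y i ∈ Icc 0 M) (hGμ : ∀ k, Integrable (fun r => g (topBlock k r)) μ)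
    (hGπ : ∀ k, Integrable (fun r => g (topBlock k r)) π) :
    |∫ r, csbpInner g y r ∂μ - ∫ r, csbpInner g y r ∂π|
      ≤ M * ∑ k ∈ Finset.range (n + 1),
        |∫ r, g (topBlock k r) ∂μ - ∫ r, g (topBlock k r) ∂π| := by
  have hy0 : ∀ i, 0 ≤ y i := fun i => (hy i).1
  rw [integral_csbpInner h0 hmono hy0 hGμ, integral_csbpInner h0 hmono hy0 hGπ,
    ← Finset.sum_sub_distrib, Finset.mul_sum]
  refine (Finset.abs_sum_le_sum_abs _ _).trans (Finset.sum_le_sum fun k _ => ?_)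
  rw [← mul_sub, abs_mul, abs_of_nonneg (sub_nonneg.2 (levels_le_succ hmono hy0 k))]
  gcongr
  linarith [levels_le (fun i => (hy i).2) hM (k + 1), levels_nonneg hy0 k]

lemma abs_phiChar_sub_csbpChar_le {K : NNReal} (hK : LipschitzWith K g) (hb : ∀ z, |g z| ≤ 1)
    (hz : ∀ z : Fin (n + 1) → ℝ, (∀ i, |z i| ≤ α) → g z = 0) (hα : 0 < α)
    (hμ : Integrable (fun r => min r (r ^ 2)) μ) (hμpos : ∀ᵐ r ∂μ, 0 < r)
    (hπ : Integrable (fun r => min r (r ^ 2)) π) (hπpos : ∀ᵐ r ∂π, 0 < r)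
    (hM : 0 < M) (hMa : M ≤ a) (hmono : Monotone y) (hy : ∀ i, y i ∈ Icc 0 M) :
    |phiChar g μ a y - csbpChar g π y|
      ≤ K * M ^ 2 * (a⁻¹ * ∫ r in Ioi α, r ∂μ) + M / α * ∫ r in Ioi (α / M * a), r ∂μ
        + M * ∑ k ∈ Finset.range (n + 1),
          |∫ r, g (topBlock k r) ∂μ - ∫ r, g (topBlock k r) ∂π| := by
  have hg := hK.continuous
  have h0 : g 0 = 0 := hz 0 fun _ => by simpa using hα.le
  have ha := hM.trans_le hMa
  have hGμ := integrable_g_topBlock hg hb hz hα hμ hμpos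
  have hIα := integrable_indicator_Ioi_id hμ hμpos hα
  have hIa := integrable_indicator_Ioi_id hμ hμpos (by positivity : 0 < α / M * a)
  have hsplit : phiChar g μ a y - csbpChar g π y
      = (∫ r, (fvInner g a y r - csbpInner g y r) ∂μ)
        + (∫ r, csbpInner g y r ∂μ - ∫ r, csbpInner g y r ∂π) := by
    change (∫ r, fvInner g a y r ∂μ) - ∫ r, csbpInner g y r ∂π = _
    rw [integral_sub (integrable_fvInner hz hg hb hα hμ hμpos ha
      fun i => ⟨(hy i).1, (hy i).2.trans hMa⟩)
      (integrable_csbpInner h0 hmono (fun i => (hy i).1) hGμ)]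
    ring
  rw [hsplit]
  refine (abs_add_le _ _).trans (add_le_add ?_ (abs_integral_csbpInner_sub_le h0 hmono hM.le hy
    hGμ (integrable_g_topBlock hg hb hz hα hπ hπpos)))
  calc |∫ r, (fvInner g a y r - csbpInner g y r) ∂μ|
      ≤ ∫ r, (K * M ^ 2 / a * (Ioi α).indicator id r
          + M / α * (Ioi (α / M * a)).indicator id r) ∂μ :=
        norm_integral_le_of_norm_le (f := fun r => fvInner g a y r - csbpInner g y r)
          ((hIα.const_mul _).add (hIa.const_mul _))
          (by filter_upwards [hμpos] with r hr using
            abs_fvInner_sub_csbpInner_le hz hK hb hα hM hMa hy hr.le)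
    _ = K * M ^ 2 * (a⁻¹ * ∫ r in Ioi α, r ∂μ) + M / α * ∫ r in Ioi (α / M * a), r ∂μ := by
        rw [integral_add (hIα.const_mul _) (hIa.const_mul _), integral_const_mul,
          integral_const_mul, integral_indicator measurableSet_Ioi,
          integral_indicator measurableSet_Ioi, div_eq_mul_inv, mul_assoc]
        rfl

end Estimates

lemma tendsto_biSup_abs_of_eventually_le {ι β : Type*} {l : Filter β} {S : Set ι}
    (hS : S.Nonempty) {F : β → ι → ℝ} {B : β → ℝ} (hB : Tendsto B l (nhds 0))
    (hFB : ∀ᶠ b in l, ∀ y ∈ S, |F b y| ≤ B b) :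
    Tendsto (fun b => ⨆ y ∈ S, |F b y|) l (nhds 0) := by
  refine squeeze_zero' (Eventually.of_forall fun b =>
    Real.iSup_nonneg fun y => Real.iSup_nonneg fun _ => abs_nonneg _) ?_ hB
  filter_upwards [hFB] with b hb
  have hB0 : 0 ≤ B b := (abs_nonneg _).trans (hb _ hS.some_mem)
  exact Real.iSup_le (fun y => Real.iSup_le (fun hy => hb y hy) hB0) hB0

/-- With `g` a bounded Lipschitz test function vanishing
where all coordinates are `≤ α` in absolute value, and `(ν^{(a)})` satisfying
Assumption (H): (i) `|φ_a(y)| ≤ (2/α) y_p ∫ r 1_{r>α} ν^{(a)}(dr)`; and (ii)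
`φ_a(y) → ∫ π(dr) ∫_0^∞ du g(r 1_{u≤y₁}, …, r 1_{u≤y_p})` uniformly on
`{0 ≤ y₁ ≤ ⋯ ≤ y_p ≤ M}` as `a → ∞`. -/
theorem stmt14
    (n : ℕ) (α : ℝ) (hα : 0 < α)
    (g : (Fin (n + 1) → ℝ) → ℝ)
    (hg_lip : ∃ K : NNReal, LipschitzWith K g)
    (hg_bdd : ∀ z : Fin (n + 1) → ℝ, |g z| ≤ 1)
    (hg_zero : ∀ z : Fin (n + 1) → ℝ, (∀ i, |z i| ≤ α) → g z = 0)
    (π : Measure ℝ) (hπsupp : π (Set.Ioi 0)ᶜ = 0)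
    (hπmom : ∫⁻ r, ENNReal.ofReal (min r (r ^ 2)) ∂π < ⊤)
    (ν : ℝ → Measure ℝ)
    (hνsupp : ∀ a : ℝ, 0 < a → (ν a) (Set.Ioc 0 a)ᶜ = 0)
    (hνmom : ∀ a : ℝ, 0 < a → ∫⁻ r, ENNReal.ofReal (r ^ 2) ∂(ν a) < ⊤)
    (hH : ∀ f : ℝ → ℝ, ContinuousOn f (Set.Ioi 0) →
      (∃ C : ℝ, ∀ x ∈ Set.Ioi (0 : ℝ), |f x| ≤ C) →
      Tendsto (fun a => ∫ r in Set.Ioi (0 : ℝ), f r * min r (r ^ 2) ∂(ν a))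
        atTop
        (nhds (∫ r in Set.Ioi (0 : ℝ), f r * min r (r ^ 2) ∂π))) :
    (∀ a : ℝ, 0 < a → ∀ y : Fin (n + 1) → ℝ, Monotone y →
      (∀ i, 0 ≤ y i ∧ y i ≤ a) →
      |phiChar g (ν a) a y|
        ≤ (2 / α) * y (Fin.last n) * ∫ r in Set.Ioi α, r ∂(ν a)) ∧
    (∀ M : ℝ, 0 < M →
      Tendsto
        (fun a : ℝ =>
          ⨆ y ∈ {y : Fin (n + 1) → ℝ |
              Monotone y ∧ ∀ i, y i ∈ Set.Icc (0 : ℝ) M},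
            |phiChar g (ν a) a y
              - ∫ r, (∫ u in Set.Ioi (0 : ℝ),
                  g (fun i => r * (if u ≤ y i then (1 : ℝ) else 0))) ∂π|)
        atTop (nhds 0)) := by
  obtain ⟨K, hK⟩ := hg_lip
  replace hH : MinSqWeakTendsto ν π := hH
  have hπpos : ∀ᵐ r ∂π, 0 < r := ae_iff.2 hπsupp
  have hνpos : ∀ a, 0 < a → ∀ᵐ r ∂ν a, 0 < r := fun a ha =>
    (ae_iff.2 (hνsupp a ha) : ∀ᵐ r ∂ν a, r ∈ Ioc 0 a).mono fun _ hr => hr.1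
  have hν : ∀ a, 0 < a → Integrable (fun r => min r (r ^ 2)) (ν a) := fun a ha =>
    integrable_min_sq_of_lintegral_sq (hνpos a ha) (hνmom a ha)
  have hπ := integrable_min_sq_of_lintegral hπpos hπmom
  refine ⟨fun a ha y hmono hy => abs_phiChar_le hg_zero hK.continuous hg_bdd hα (hν a ha)
    (hνpos a ha) ha (hy _).1 (hy _).2 fun i => ⟨(hy i).1, hmono (Fin.le_last i)⟩, fun M hM => ?_⟩
  have hνpos' := (eventually_gt_atTop 0).mono hνpos
  have hν' := (eventually_gt_atTop 0).mono hν
  have hG (k : ℕ) := ((hH.tendsto_integral_g_topBlock hπpos hνpos' hK.continuous hg_bdd hg_zero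
    hα k).sub_const (∫ r, g (topBlock k r) ∂π)).abs
  have hB := (((hH.tendsto_inv_mul_setIntegral_Ioi_id hπpos hν' hνpos' hα).const_mul
    (K * M ^ 2)).add ((hH.tendsto_setIntegral_Ioi_mul_id hπ hπpos hν' hνpos'
      (div_pos hα hM)).const_mul (M / α))).add
    ((tendsto_finsetSum (Finset.range (n + 1)) fun k _ => hG k).const_mul M)
  simp only [sub_self, abs_zero, Finset.sum_const_zero, mul_zero, add_zero] at hB
  refine tendsto_biSup_abs_of_eventually_le ?_ hB ?_
  · exact ⟨0, monotone_const, fun _ => ⟨le_rfl, hM.le⟩⟩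
  filter_upwards [eventually_ge_atTop M, hν', hνpos'] with a hMa ha hapos y hy
  exact abs_phiChar_sub_csbpChar_le hK hg_bdd hg_zero hα ha hapos hπ hπpos hM hMa hy.1 hy.2
end
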